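/- arXiv:1310.3252 — 3 statements merged into one kernel-verified Lean document; each statement's English description precedes it below -/
import Mathlib

section
/- (Splicing Lemma) Let G_a and G_b be two networks sharing the same terminal set T, and let ρ ≥ 1. Suppose that every demand d between terminals that can be routed in G_a using only terminal-free flow paths satisfies that d/ρ can be routed in G_b (using arbitrary flow paths). Then every demand d routable in G_a (along arbitrary flow paths) satisfies that d/ρ is routable in G_b. -/
open Classical Finset
noncomputable section

/-- A path `p` (a list of vertices) goes from `s` to `t`. -/
def isPathFrom {V : Type*} (s t : V) (p : List V) : Prop :=
  p.head? = some s ∧ p.getLast? = some t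

/-- The number of times the undirected edge `{u,v}` is used by the path `p`. -/
def edgeCount {V : Type*} (u v : V) (p : List V) : ℕ :=
  (p.zip p.tail).countP (fun e => decide (e.1 = u ∧ e.2 = v ∨ e.1 = v ∧ e.2 = u))

/-- Total amount shipped by a path-flow `f` between `s` and `t`. -/
def delivered {V : Type*} (f : List V →₀ ℝ) (s t : V) : ℝ :=
  f.sum fun p x => if isPathFrom s t p ∨ isPathFrom t s p then x else 0

/-- Total load that a path-flow `f` puts on the undirected edge `{u,v}`. -/
def edgeLoad {V : Type*} (f : List V →₀ ℝ) (u v : V) : ℝ :=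
  f.sum fun p x => x * edgeCount u v p

/-- A multicommodity path-flow is feasible for capacities `c` and terminals `T`:
nonnegative, respects capacities, and routes only between terminals. -/
def FeasibleFlow {V : Type*} (c : V → V → ℝ) (T : Set V) (f : List V →₀ ℝ) : Prop :=
  (∀ p, 0 ≤ f p) ∧ (∀ u v, edgeLoad f u v ≤ c u v) ∧
  (∀ p ∈ f.support, ∃ s ∈ T, ∃ t ∈ T, isPathFrom s t p)

/-- The demand `d` (on pairs of terminals) is routable in the network `(c, T)`. -/
def Routable {V : Type*} (c : V → V → ℝ) (T : Set V) (d : V → V → ℝ) : Prop :=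
  ∃ f : List V →₀ ℝ, FeasibleFlow c T f ∧
    ∀ s ∈ T, ∀ t ∈ T, s ≠ t → d s t ≤ delivered f s t

/-- Maximum concurrent flow `λ_G(d)`. -/
def lamG {V : Type*} (c : V → V → ℝ) (T : Set V) (d : V → V → ℝ) : ℝ :=
  sSup {l : ℝ | 0 ≤ l ∧ Routable c T (fun s t => l * d s t)}

/-- A path is terminal-free if all of its internal vertices are non-terminals. -/
def TerminalFree {V : Type*} (T : Set V) (p : List V) : Prop :=
  ∀ v ∈ p.tail.dropLast, v ∉ T

/-- Routability of a demand using only terminal-free flow paths. -/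
def RoutableTF {V : Type*} (c : V → V → ℝ) (T : Set V) (d : V → V → ℝ) : Prop :=
  ∃ f : List V →₀ ℝ, FeasibleFlow c T f ∧ (∀ p ∈ f.support, TerminalFree T p) ∧
    ∀ s ∈ T, ∀ t ∈ T, s ≠ t → d s t ≤ delivered f s t

namespace Splice
variable {V : Type*}

/-! ### Linear sums over flows -/

def ind (s t : V) (p : List V) : ℝ := if isPathFrom s t p ∨ isPathFrom t s p then 1 else 0

def lsum (φ : List V → ℝ) (f : List V →₀ ℝ) : ℝ := f.sum fun p x => x * φ p

lemma fsum_eq {M : Type*} [AddCommMonoid M] (f : List V →₀ ℝ) (g : List V → ℝ → M) :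
    f.sum g = ∑ p ∈ f.support, g p (f p) := rfl

lemma lsum_eq_sum {φ : List V → ℝ} {f : List V →₀ ℝ} {S : Finset (List V)}
    (hS : f.support ⊆ S) : lsum φ f = ∑ p ∈ S, f p * φ p :=
  Finsupp.sum_of_support_subset f hS _ (by simp)

lemma lsum_zero (φ : List V → ℝ) : lsum φ (0 : List V →₀ ℝ) = 0 := by
  simp [lsum]

lemma lsum_add (φ : List V → ℝ) (f g : List V →₀ ℝ) :
    lsum φ (f + g) = lsum φ f + lsum φ g :=
  Finsupp.sum_add_index' (by simp) (by intro p x y; ring)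

lemma lsum_sub (φ : List V → ℝ) (f g : List V →₀ ℝ) :
    lsum φ (f - g) = lsum φ f - lsum φ g :=
  Finsupp.sum_sub_index (by intro p x y; ring)

lemma lsum_single (φ : List V → ℝ) (p : List V) (x : ℝ) :
    lsum φ (Finsupp.single p x) = x * φ p :=
  Finsupp.sum_single_index (by simp)

lemma lsum_smul (φ : List V → ℝ) (c : ℝ) (f : List V →₀ ℝ) :
    lsum φ (c • f) = c * lsum φ f := by
  rw [lsum_eq_sum (S := f.support) Finsupp.support_smul,
    lsum_eq_sum (Finset.Subset.refl _), Finset.mul_sum]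
  exact Finset.sum_congr rfl (by intro p _; simp [Finsupp.smul_apply]; ring)

lemma lsum_mono {φ : List V → ℝ} (hφ : ∀ p, 0 ≤ φ p) {f g : List V →₀ ℝ}
    (hfg : ∀ p, f p ≤ g p) : lsum φ f ≤ lsum φ g := by
  rw [lsum_eq_sum (S := f.support ∪ g.support) Finset.subset_union_left,
    lsum_eq_sum (S := f.support ∪ g.support) Finset.subset_union_right]
  exact Finset.sum_le_sum fun p _ => mul_le_mul_of_nonneg_right (hfg p) (hφ p)

lemma lsum_nonneg {φ : List V → ℝ} (hφ : ∀ p, 0 ≤ φ p) {f : List V →₀ ℝ}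
    (hf : ∀ p, 0 ≤ f p) : 0 ≤ lsum φ f := by
  have := lsum_mono hφ (f := 0) (g := f) (by simpa using hf)
  simpa [lsum_zero] using this

lemma lsum_finset_sum (φ : List V → ℝ) {ι : Type*} (S : Finset ι) (F : ι → List V →₀ ℝ) :
    lsum φ (∑ i ∈ S, F i) = ∑ i ∈ S, lsum φ (F i) := by
  classical
  induction S using Finset.induction with
  | empty => simp [lsum_zero]
  | insert a s hx ih => simp [Finset.sum_insert hx, lsum_add, ih]

lemma delivered_eq (f : List V →₀ ℝ) (s t : V) : delivered f s t = lsum (ind s t) f := by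
  unfold delivered lsum ind
  exact Finsupp.sum_congr (by intro p _; split <;> simp)

lemma edgeLoad_eq (f : List V →₀ ℝ) (u v : V) :
    edgeLoad f u v = lsum (fun p => (edgeCount u v p : ℝ)) f := rfl

lemma lsum_filter (φ : List V → ℝ) (P : List V → Prop) [DecidablePred P] (g : List V →₀ ℝ) :
    lsum φ (g.filter P) = lsum (fun q => if P q then φ q else 0) g := by
  rw [lsum_eq_sum (S := g.support)
      (by rw [Finsupp.support_filter]; exact Finset.filter_subset _ _),
    lsum_eq_sum (Finset.Subset.refl _)]
  refine Finset.sum_congr rfl fun q _ => ?_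
  rw [Finsupp.filter_apply]
  split <;> simp

lemma lsum_mapDomain (φ : List V → ℝ) (k : List V → List V) (g : List V →₀ ℝ) :
    lsum φ (g.mapDomain k) = lsum (fun q => φ (k q)) g := by
  rw [Finsupp.mapDomain,
    show (g.sum fun a => Finsupp.single (k a)) = ∑ a ∈ g.support, Finsupp.single (k a) (g a)
      from rfl,
    lsum_finset_sum, lsum_eq_sum (Finset.Subset.refl _)]
  exact Finset.sum_congr rfl fun q _ => lsum_single _ _ _

lemma mapDomain_nonneg {g : List V →₀ ℝ} (hg : ∀ q, 0 ≤ g q) (k : List V → List V)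
    (q : List V) : 0 ≤ g.mapDomain k q := by
  rw [Finsupp.mapDomain, Finsupp.sum_apply]
  refine Finset.sum_nonneg fun p _ => ?_
  show 0 ≤ (Finsupp.single (k p) (g p)) q
  rw [Finsupp.single_apply]
  split
  · exact hg p
  · exact le_refl 0

/-! ### Edge-count lemmas -/

lemma edgeCount_singleton (u v x : V) : edgeCount u v [x] = 0 := rfl

lemma edgeCount_cons_cons (u v x y : V) (r : List V) :
    edgeCount u v (x :: y :: r) = edgeCount u v [x, y] + edgeCount u v (y :: r) := by
  simp [edgeCount, List.countP_cons]
  omega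

lemma edgeCount_pair_comm (u v x y : V) : edgeCount u v [x, y] = edgeCount u v [y, x] := by
  have : (x = u ∧ y = v ∨ x = v ∧ y = u) ↔ (y = u ∧ x = v ∨ y = v ∧ x = u) := by tauto
  simp [edgeCount, List.countP_cons, this]

lemma edgeCount_split (u v : V) (l1 l2 : List V) (a : V) :
    edgeCount u v (l1 ++ a :: l2) = edgeCount u v (l1 ++ [a]) + edgeCount u v (a :: l2) := by
  induction l1 with
  | nil => simp [edgeCount_singleton]
  | cons x l1' ih =>
    cases l1' with
    | nil =>
      have h1 : ([x] ++ a :: l2) = x :: a :: l2 := rfl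
      have h2 : ([x] ++ [a]) = x :: a :: ([] : List V) := rfl
      rw [h1, h2, edgeCount_cons_cons u v x a l2, edgeCount_cons_cons u v x a ([] : List V)]
      all_goals try (have hz : edgeCount u v (a :: ([] : List V)) = 0 := rfl; omega)
    | cons y l1'' =>
      have h1 : (x :: y :: l1'') ++ a :: l2 = x :: ((y :: l1'') ++ a :: l2) := rfl
      have h2 : (x :: y :: l1'') ++ [a] = x :: ((y :: l1'') ++ [a]) := rfl
      rw [h1, h2]
      have e1 : ((y :: l1'') ++ a :: l2) = y :: (l1'' ++ a :: l2) := rfl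
      have e2 : ((y :: l1'') ++ [a]) = y :: (l1'' ++ [a]) := rfl
      rw [e1, e2, edgeCount_cons_cons u v x y (l1'' ++ a :: l2),
        edgeCount_cons_cons u v x y (l1'' ++ [a])]
      rw [show ((y :: l1'') ++ a :: l2) = y :: (l1'' ++ a :: l2) from rfl] at ih
      rw [show ((y :: l1'') ++ [a]) = y :: (l1'' ++ [a]) from rfl] at ih
      omega

lemma edgeCount_reverse (u v : V) (p : List V) : edgeCount u v p.reverse = edgeCount u v p := by
  induction p with
  | nil => rfl
  | cons x r ih =>
    cases r with
    | nil => rfl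
    | cons y r' =>
      have hrev : (x :: y :: r').reverse = r'.reverse ++ y :: [x] := by simp
      rw [hrev, edgeCount_split u v r'.reverse [x] y, edgeCount_cons_cons u v x y r']
      have : r'.reverse ++ [y] = (y :: r').reverse := by simp
      rw [this, ih, edgeCount_pair_comm u v y x]
      omega

/-! ### Internal-vertex counting and path splitting -/

def icount (T : Set V) (p : List V) : ℕ :=
  (p.tail.dropLast).countP (fun v => decide (v ∈ T))

lemma terminalFree_of_icount_zero {T : Set V} {p : List V} (h : icount T p = 0) :
    TerminalFree T p := by
  intro v hv
  have := (List.countP_eq_zero).1 h v hv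
  simpa using this

lemma exists_split {p : List V} {a : V} (ha : a ∈ p.tail.dropLast) :
    ∃ h m1 l2, p = (h :: m1) ++ a :: l2 ∧ l2 ≠ [] := by
  obtain ⟨m1, m2, hm⟩ := List.append_of_mem ha
  have hpnil : p ≠ [] := by rintro rfl; simp at ha
  obtain ⟨h, t, rfl⟩ := List.exists_cons_of_ne_nil hpnil
  have htail : (h :: t).tail = t := rfl
  rw [htail] at hm
  have htnil : t ≠ [] := by rintro rfl; simp at ha
  have : t = t.dropLast ++ [t.getLast htnil] := (List.dropLast_concat_getLast htnil).symm
  rw [hm] at this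
  refine ⟨h, m1, m2 ++ [t.getLast htnil], ?_, by simp⟩
  simp only [List.cons_append, List.append_assoc] at this ⊢
  exact congrArg (List.cons h) this

lemma icount_split {T : Set V} (h : V) (m1 l2 : List V) (a : V) (hl2 : l2 ≠ []) (haT : a ∈ T) :
    icount T ((h :: m1) ++ a :: l2) = icount T ((h :: m1) ++ [a]) + icount T (a :: l2) + 1 := by
  unfold icount
  have h1 : ((h :: m1) ++ a :: l2).tail = m1 ++ a :: l2 := rfl
  have h2 : ((h :: m1) ++ [a]).tail = m1 ++ [a] := rfl
  have h3 : (a :: l2).tail = l2 := rfl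
  rw [h1, h2, h3, List.dropLast_append_cons, List.dropLast_concat]
  have h4 : (a :: l2).dropLast = a :: l2.dropLast := by
    cases l2 with
    | nil => exact absurd rfl hl2
    | cons z l => simp
  rw [h4]
  simp [List.countP_append, List.countP_cons, haT]
  omega

lemma len_lt_left (h : V) (m1 l2 : List V) (a : V) (hl2 : l2 ≠ []) :
    ((h :: m1) ++ [a]).length < ((h :: m1) ++ a :: l2).length := by
  cases l2 with
  | nil => exact absurd rfl hl2
  | cons z l => simp only [List.length_append, List.length_cons, List.length_nil]; omega

lemma len_lt_right (h : V) (m1 l2 : List V) (a : V) :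
    (a :: l2).length < ((h :: m1) ++ a :: l2).length := by
  simp only [List.length_append, List.length_cons]; omega

lemma getLast?_split (h : V) (m1 l2 : List V) (a : V) :
    ((h :: m1) ++ a :: l2).getLast? = (a :: l2).getLast? := by
  rw [List.getLast?_append]
  cases l2 with
  | nil => rfl
  | cons z l =>
    have : (a :: z :: l).getLast? = some ((z :: l).getLast (by simp)) := by
      rw [List.getLast?_eq_getLast (l := a :: z :: l) (by simp)]
      simp [List.getLast_cons]
    simp [Option.or, this]

/-! ### Path endpoints -/

lemma pathFrom_unique {q : List V} {x y x' y' : V} (h1 : isPathFrom x y q)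
    (h2 : isPathFrom x' y' q) : x = x' ∧ y = y' :=
  ⟨Option.some.inj (h1.1.symm.trans h2.1), Option.some.inj (h1.2.symm.trans h2.2)⟩

lemma ind_nonneg (s t : V) (p : List V) : 0 ≤ ind s t p := by
  unfold ind; split <;> norm_num

lemma ind_comm (s t : V) (p : List V) : ind s t p = ind t s p := by
  unfold ind
  by_cases hc : isPathFrom s t p ∨ isPathFrom t s p
  · rw [if_pos hc, if_pos hc.symm]
  · rw [if_neg hc, if_neg fun hc2 => hc hc2.symm]

lemma ind_eq_one_left {x y : V} {q : List V} (hq : isPathFrom x y q) : ind x y q = 1 :=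
  if_pos (Or.inl hq)

lemma ind_eq_one_right {x y : V} {q : List V} (hq : isPathFrom x y q) : ind y x q = 1 :=
  if_pos (Or.inr hq)

lemma ind_eq_zero {s' t' x y : V} {q : List V} (hq : isPathFrom x y q)
    (h1 : ¬(s' = x ∧ t' = y)) (h2 : ¬(s' = y ∧ t' = x)) : ind s' t' q = 0 := by
  unfold ind
  rw [if_neg]
  rintro (hh | hh)
  · obtain ⟨e1, e2⟩ := pathFrom_unique hh hq; exact h1 ⟨e1, e2⟩
  · obtain ⟨e1, e2⟩ := pathFrom_unique hh hq; exact h2 ⟨e2, e1⟩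

/-! ### Orientation and concatenation -/

def orient (s : V) (q : List V) : List V := if q.head? = some s then q else q.reverse

lemma orient_edgeCount (u v s : V) (q : List V) :
    edgeCount u v (orient s q) = edgeCount u v q := by
  unfold orient; split
  · rfl
  · exact edgeCount_reverse u v q

lemma orient_path {s a : V} {q : List V} (hq : isPathFrom s a q ∨ isPathFrom a s q)
    (hsa : s ≠ a) : isPathFrom s a (orient s q) := by
  unfold orient; split
  · rename_i hh
    rcases hq with h1 | h1
    · exact h1
    · exact absurd (Option.some.inj (h1.1.symm.trans hh)).symm hsa
  · rename_i hh
    rcases hq with h1 | h1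
    · exact absurd h1.1 hh
    · exact ⟨by rw [List.head?_reverse]; exact h1.2, by rw [List.getLast?_reverse]; exact h1.1⟩

lemma path_cons {a t : V} {q : List V} (h : isPathFrom a t q) : ∃ l, q = a :: l := by
  obtain ⟨ys, hy⟩ := List.head?_eq_some_iff.mp h.1; exact ⟨ys, hy⟩

lemma concat_path {s a t : V} {q1 q2 : List V} (h1 : isPathFrom s a q1)
    (h2 : isPathFrom a t q2) (hat : a ≠ t) : isPathFrom s t (q1 ++ q2.tail) := by
  obtain ⟨l, rfl⟩ := path_cons h2
  have hlne : l ≠ [] := by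
    rintro rfl
    exact hat (Option.some.inj h2.2)
  constructor
  · rw [List.head?_append, h1.1]; rfl
  · have hl : l.getLast? = some (l.getLast hlne) := List.getLast?_eq_getLast hlne
    have hcons : (a :: l).getLast? = l.getLast? := by
      rw [show a :: l = [a] ++ l from rfl, List.getLast?_append, hl]; rfl
    have : l.getLast? = some t := by rw [← hcons]; exact h2.2
    rw [show (a :: l).tail = l from rfl, List.getLast?_append, this]; rfl

lemma concat_count (u v : V) {s a t : V} {q1 q2 : List V} (h1 : isPathFrom s a q1)
    (h2 : isPathFrom a t q2) :
    edgeCount u v (q1 ++ q2.tail) = edgeCount u v q1 + edgeCount u v q2 := by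
  obtain ⟨l, rfl⟩ := path_cons h2
  have hq1ne : q1 ≠ [] := by rintro rfl; simp [isPathFrom] at h1
  have hdl : q1.dropLast ++ [q1.getLast hq1ne] = q1 := List.dropLast_concat_getLast hq1ne
  have hga : q1.getLast hq1ne = a := by
    have := List.getLast?_eq_getLast hq1ne
    exact Option.some.inj (this.symm.trans h1.2)
  have hq1 : q1 = q1.dropLast ++ [a] := by rw [← hga, hdl]
  have hconc : q1 ++ (a :: l).tail = q1.dropLast ++ a :: l := by
    rw [show (a :: l).tail = l from rfl]
    conv_lhs => rw [hq1]
    rw [List.append_assoc]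
    rfl
  rw [hconc, edgeCount_split u v q1.dropLast l a, ← hq1]

end Splice

open Splice

/-- Terminal-free base case of the splicing lemma. -/
lemma Splice.tfbase {V : Type*} (ca cb : V → V → ℝ) (T : Set V) (ρ : ℝ)
    (h : ∀ d : V → V → ℝ, (∀ s t, 0 ≤ d s t) →
      RoutableTF ca T d → Routable cb T (fun s t => d s t / ρ))
    (f : List V →₀ ℝ) (hf : FeasibleFlow ca T f)
    (h0 : ∑ p ∈ f.support, icount T p = 0) :
    ∃ g : List V →₀ ℝ, FeasibleFlow cb T g ∧
      ∀ s ∈ T, ∀ t ∈ T, s ≠ t → delivered f s t / ρ ≤ delivered g s t := by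
  have hTF : ∀ p ∈ f.support, TerminalFree T p := fun p hp =>
    terminalFree_of_icount_zero (Finset.sum_eq_zero_iff.mp h0 p hp)
  have hdpos : ∀ s t, 0 ≤ delivered f s t := fun s t => by
    rw [delivered_eq]; exact lsum_nonneg (ind_nonneg s t) hf.1
  obtain ⟨g, hg, hgd⟩ := h (fun s t => delivered f s t) hdpos
    ⟨f, hf, hTF, fun s _ t _ _ => le_refl _⟩
  exact ⟨g, hg, fun s hs t ht hst => hgd s hs t ht hst⟩

set_option maxHeartbeats 2000000 in
/-- Key induction: any feasible flow in `ca` can be matched (up to `ρ`) in `cb`. -/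
lemma Splice.key {V : Type*} (ca cb : V → V → ℝ) (T : Set V) (ρ : ℝ) (hρ : 1 ≤ ρ)
    (h : ∀ d : V → V → ℝ, (∀ s t, 0 ≤ d s t) →
      RoutableTF ca T d → Routable cb T (fun s t => d s t / ρ)) :
    ∀ N : ℕ, ∀ f : List V →₀ ℝ, FeasibleFlow ca T f →
      (∑ p ∈ f.support, icount T p) ≤ N →
      ∃ g : List V →₀ ℝ, FeasibleFlow cb T g ∧
        ∀ s ∈ T, ∀ t ∈ T, s ≠ t → delivered f s t / ρ ≤ delivered g s t := by
  have hρ0 : (0:ℝ) < ρ := lt_of_lt_of_le one_pos hρ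
  intro N
  induction N with
  | zero =>
    intro f hf hm
    exact tfbase ca cb T ρ h f hf (Nat.le_zero.mp hm)
  | succ N ih =>
    intro f hf hm
    by_cases h0 : ∑ p ∈ f.support, icount T p = 0
    · exact tfbase ca cb T ρ h f hf h0
    · obtain ⟨p, hp, hpc⟩ : ∃ p ∈ f.support, icount T p ≠ 0 := by
        by_contra hc; push_neg at hc; exact h0 (Finset.sum_eq_zero hc)
      have hexa : ∃ a ∈ p.tail.dropLast, a ∈ T := by
        by_contra hc; push_neg at hc
        exact hpc (List.countP_eq_zero.mpr fun a ha => by simpa using hc a ha)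
      obtain ⟨a, hamem, haT⟩ := hexa
      obtain ⟨hh, m1, l2, hpeq, hl2⟩ := exists_split hamem
      set p1 : List V := (hh :: m1) ++ [a] with hp1def
      set p2 : List V := a :: l2 with hp2def
      set w : ℝ := f p with hwdef
      have hw : 0 < w := lt_of_le_of_ne (hf.1 p) (Ne.symm (Finsupp.mem_support_iff.mp hp))
      obtain ⟨s, hsT, t, htT, hpath⟩ := hf.2.2 p hp
      have hheadp : p.head? = some hh := by rw [hpeq]; rfl
      have hs_eq : s = hh := Option.some.inj (hpath.1.symm.trans hheadp)
      have hp1path : isPathFrom s a p1 :=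
        ⟨by rw [hp1def, hs_eq]; rfl, by rw [hp1def]; exact List.getLast?_concat⟩
      have hp2path : isPathFrom a t p2 := by
        refine ⟨by rw [hp2def]; rfl, ?_⟩
        have := getLast?_split hh m1 l2 a
        rw [← hp2def] at this
        rw [show (hh :: m1) ++ p2 = p from hpeq.symm] at this
        rw [← this]; exact hpath.2
      have hlen1 := len_lt_left hh m1 l2 a hl2
      have hlen2 := len_lt_right hh m1 l2 a
      rw [← hp1def, ← hp2def, ← hpeq] at hlen1
      rw [← hp2def, ← hpeq] at hlen2
      have hp1ne : p1 ≠ p := fun e => by rw [e] at hlen1; exact lt_irrefl _ hlen1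
      have hp2ne : p2 ≠ p := fun e => by rw [e] at hlen2; exact lt_irrefl _ hlen2
      set f' : List V →₀ ℝ :=
        f - Finsupp.single p w + Finsupp.single p1 w + Finsupp.single p2 w with hf'def
      have hf'apply : ∀ q, f' q = f q - (Finsupp.single p w) q + (Finsupp.single p1 w) q
          + (Finsupp.single p2 w) q := by
        intro q
        rw [hf'def]
        simp [Finsupp.add_apply, Finsupp.sub_apply]
      have hf'p : f' p = 0 := by
        rw [hf'apply, Finsupp.single_apply, Finsupp.single_apply, Finsupp.single_apply,
          if_pos rfl, if_neg hp1ne, if_neg hp2ne, hwdef]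
        ring
      have hsingle_nonneg : ∀ (r : List V) (q : List V), 0 ≤ (Finsupp.single r w) q := by
        intro r q
        rw [Finsupp.single_apply]
        split
        · exact hw.le
        · exact le_refl 0
      have hf'nonneg : ∀ q, 0 ≤ f' q := by
        intro q
        by_cases hq : q = p
        · rw [hq, hf'p]
        · rw [hf'apply]
          have h1 : (Finsupp.single p w) q = 0 := by
            rw [Finsupp.single_apply, if_neg (fun e => hq e.symm)]
          rw [h1]
          have := hf.1 q
          have := hsingle_nonneg p1 q
          have := hsingle_nonneg p2 q
          linarith
      have hsupp' : f'.support ⊆ insert p1 (insert p2 (f.support.erase p)) := by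
        intro q hq
        rw [Finsupp.mem_support_iff] at hq
        by_cases h1 : q = p1
        · rw [h1]; exact Finset.mem_insert_self _ _
        by_cases h2 : q = p2
        · rw [h2]; exact Finset.mem_insert_of_mem (Finset.mem_insert_self _ _)
        have hqp : q ≠ p := fun e => by rw [e, hf'p] at hq; exact hq rfl
        have heq : f' q = f q := by
          rw [hf'apply, Finsupp.single_apply, Finsupp.single_apply, Finsupp.single_apply,
            if_neg (fun e => hqp e.symm), if_neg (fun e => h1 e.symm),
            if_neg (fun e => h2 e.symm)]
          ring
        exact Finset.mem_insert_of_mem (Finset.mem_insert_of_mem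
          (Finset.mem_erase.mpr ⟨hqp, Finsupp.mem_support_iff.mpr (heq ▸ hq)⟩))
      have hmeas' : ∑ q ∈ f'.support, icount T q ≤ N := by
        have hb := Finset.sum_le_sum_of_subset (f := icount T) hsupp'
        have hins1 : ∑ q ∈ insert p1 (insert p2 (f.support.erase p)), icount T q
            ≤ icount T p1 + ∑ q ∈ insert p2 (f.support.erase p), icount T q := by
          by_cases hmem : p1 ∈ insert p2 (f.support.erase p)
          · rw [Finset.insert_eq_self.mpr hmem]; omega
          · rw [Finset.sum_insert hmem]
        have hins2 : ∑ q ∈ insert p2 (f.support.erase p), icount T q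
            ≤ icount T p2 + ∑ q ∈ f.support.erase p, icount T q := by
          by_cases hmem : p2 ∈ f.support.erase p
          · rw [Finset.insert_eq_self.mpr hmem]; omega
          · rw [Finset.sum_insert hmem]
        have herase : ∑ q ∈ f.support.erase p, icount T q + icount T p
            = ∑ q ∈ f.support, icount T q := Finset.sum_erase_add _ _ hp
        have hic : icount T p = icount T p1 + icount T p2 + 1 := by
          have := icount_split (T := T) hh m1 l2 a hl2 haT
          rw [← hp1def, ← hp2def, ← hpeq] at this
          exact this
        omega
      have hdf' : ∀ s' t', delivered f' s' t'
          = delivered f s' t' - w * ind s' t' p + w * ind s' t' p1 + w * ind s' t' p2 := by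
        intro s' t'
        rw [hf'def, delivered_eq, lsum_add, lsum_add, lsum_sub, lsum_single, lsum_single,
          lsum_single, ← delivered_eq]
      have hfeas' : FeasibleFlow ca T f' := by
        refine ⟨hf'nonneg, ?_, ?_⟩
        · intro u v
          have hload : edgeLoad f' u v = edgeLoad f u v := by
            rw [hf'def, edgeLoad_eq, lsum_add, lsum_add, lsum_sub, lsum_single, lsum_single,
              lsum_single, ← edgeLoad_eq]
            have hsplit : (edgeCount u v p : ℝ)
                = (edgeCount u v p1 : ℝ) + (edgeCount u v p2 : ℝ) := by
              rw [hp1def, hp2def, hpeq, ← hp2def]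
              rw [hp2def]
              rw [show edgeCount u v ((hh :: m1) ++ a :: l2)
                = edgeCount u v ((hh :: m1) ++ [a]) + edgeCount u v (a :: l2)
                from edgeCount_split u v (hh :: m1) l2 a]
              push_cast; ring
            rw [hsplit]; ring
          rw [hload]; exact hf.2.1 u v
        · intro q hq
          rcases Finset.mem_insert.mp (hsupp' hq) with h1 | h1
          · exact ⟨s, hsT, a, haT, h1 ▸ hp1path⟩
          rcases Finset.mem_insert.mp h1 with h2 | h2
          · exact ⟨a, haT, t, htT, h2 ▸ hp2path⟩
          · exact hf.2.2 q (Finset.mem_of_mem_erase h2)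
      obtain ⟨g, hg, hgd⟩ := ih f' hfeas' hmeas'
      have hdelf_nonneg : ∀ s' t', 0 ≤ delivered f s' t' := fun s' t' => by
        rw [delivered_eq]; exact lsum_nonneg (ind_nonneg s' t') hf.1
      by_cases heasy : s = t ∨ a = s ∨ a = t
      · refine ⟨g, hg, fun s' hs' t' ht' hst' => ?_⟩
        have hmono : delivered f s' t' ≤ delivered f' s' t' := by
          rw [hdf' s' t']
          have hn1 := ind_nonneg s' t' p1
          have hn2 := ind_nonneg s' t' p2
          have hind : ind s' t' p ≤ ind s' t' p1 + ind s' t' p2 := by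
            rcases heasy with he | he | he
            · have hz : ind s' t' p = 0 := ind_eq_zero hpath
                (fun hc => hst' (hc.1.trans (he.trans hc.2.symm)))
                (fun hc => hst' (hc.1.trans (he.symm.trans hc.2.symm)))
              rw [hz]; linarith
            · have hp2path' : isPathFrom s t p2 := he ▸ hp2path
              by_cases hcp : s' = s ∧ t' = t
              · rw [hcp.1, hcp.2, ind_eq_one_left hpath, ind_eq_one_left hp2path']
                linarith [ind_nonneg s t p1]
              by_cases hcp2 : s' = t ∧ t' = s
              · rw [hcp2.1, hcp2.2, ind_eq_one_right hpath, ind_eq_one_right hp2path']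
                linarith [ind_nonneg t s p1]
              · rw [ind_eq_zero hpath hcp hcp2]; linarith
            · have hp1path' : isPathFrom s t p1 := he ▸ hp1path
              by_cases hcp : s' = s ∧ t' = t
              · rw [hcp.1, hcp.2, ind_eq_one_left hpath, ind_eq_one_left hp1path']
                linarith [ind_nonneg s t p2]
              by_cases hcp2 : s' = t ∧ t' = s
              · rw [hcp2.1, hcp2.2, ind_eq_one_right hpath, ind_eq_one_right hp1path']
                linarith [ind_nonneg t s p2]
              · rw [ind_eq_zero hpath hcp hcp2]; linarith
          nlinarith
        calc delivered f s' t' / ρ ≤ delivered f' s' t' / ρ :=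
              div_le_div_of_nonneg_right hmono hρ0.le
          _ ≤ delivered g s' t' := hgd s' hs' t' ht' hst'
      · push_neg at heasy
        obtain ⟨hst, has, hat⟩ := heasy
        set m : ℝ := w / ρ with hmdef
        have hm0 : 0 < m := div_pos hw hρ0
        have hrm : ρ * m = w := by rw [hmdef]; field_simp
        set P1 : List V → Prop := fun q => isPathFrom s a q ∨ isPathFrom a s q with hP1def
        set P2 : List V → Prop := fun q => isPathFrom a t q ∨ isPathFrom t a q with hP2def
        set g1 := g.filter P1 with hg1def
        set g2 := g.filter P2 with hg2def
        have hindP1 : ∀ q, ind s a q = if P1 q then 1 else 0 := by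
          intro q; simp only [hP1def]; rfl
        have hindP2 : ∀ q, ind a t q = if P2 q then 1 else 0 := by
          intro q; simp only [hP2def]; rfl
        have hdel_ineq : ∀ s' t', s' ∈ T → t' ∈ T → s' ≠ t' →
            delivered f' s' t' ≤ ρ * delivered g s' t' := by
          intro s' t' hs'' ht'' hne
          have hx := hgd s' hs'' t' ht'' hne
          rw [div_le_iff₀ hρ0] at hx
          linarith
        have hV1w : w ≤ ρ * delivered g s a := by
          have h1 := hdel_ineq s a hsT haT (fun e => has e.symm)
          rw [hdf' s a] at h1
          have e0 : ind s a p = 0 :=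
            ind_eq_zero hpath (fun hc => hat hc.2) (fun hc => hst hc.1)
          have e1 : ind s a p1 = 1 := ind_eq_one_left hp1path
          have e4 := mul_nonneg hw.le (ind_nonneg s a p2)
          have e3 := hdelf_nonneg s a
          rw [e0, e1] at h1
          linarith
        have hV1pos : 0 < delivered g s a := by nlinarith
        have hmV1 : m ≤ delivered g s a := by
          rw [hmdef, div_le_iff₀ hρ0]; linarith
        have hV2w : w ≤ ρ * delivered g a t := by
          have h1 := hdel_ineq a t haT htT hat
          rw [hdf' a t] at h1
          have e0 : ind a t p = 0 :=
            ind_eq_zero hpath (fun hc => has hc.1) (fun hc => hat hc.1)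
          have e1 : ind a t p2 = 1 := ind_eq_one_left hp2path
          have e4 := mul_nonneg hw.le (ind_nonneg a t p1)
          have e3 := hdelf_nonneg a t
          rw [e0, e1] at h1
          linarith
        have hV2pos : 0 < delivered g a t := by nlinarith
        have hmV2 : m ≤ delivered g a t := by
          rw [hmdef, div_le_iff₀ hρ0]; linarith
        have hg1nn : ∀ q, 0 ≤ g1 q := fun q => by
          rw [hg1def, Finsupp.filter_apply]
          split
          · exact hg.1 q
          · exact le_refl 0
        have hg2nn : ∀ q, 0 ≤ g2 q := fun q => by
          rw [hg2def, Finsupp.filter_apply]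
          split
          · exact hg.1 q
          · exact le_refl 0
        set A := g1.mapDomain (orient s) with hAdef
        set B := g2.mapDomain (orient a) with hBdef
        have hApath : ∀ q ∈ A.support, isPathFrom s a q := by
          intro q hq
          rw [hAdef] at hq
          obtain ⟨q0, hq0, rfl⟩ := Finset.mem_image.mp (Finsupp.mapDomain_support hq)
          have hP : P1 q0 := by
            rw [hg1def, Finsupp.support_filter] at hq0
            exact (Finset.mem_filter.mp hq0).2
          rw [hP1def] at hP
          exact orient_path hP (fun e => has e.symm)
        have hBpath : ∀ q ∈ B.support, isPathFrom a t q := by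
          intro q hq
          rw [hBdef] at hq
          obtain ⟨q0, hq0, rfl⟩ := Finset.mem_image.mp (Finsupp.mapDomain_support hq)
          have hP : P2 q0 := by
            rw [hg2def, Finsupp.support_filter] at hq0
            exact (Finset.mem_filter.mp hq0).2
          rw [hP2def] at hP
          exact orient_path hP hat
        have hAnn : ∀ q, 0 ≤ A q := fun q => by
          rw [hAdef]; exact mapDomain_nonneg hg1nn _ q
        have hBnn : ∀ q, 0 ≤ B q := fun q => by
          rw [hBdef]; exact mapDomain_nonneg hg2nn _ q
        have hmassA : ∑ q ∈ A.support, A q = delivered g s a := by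
          have h1 : ∑ q ∈ A.support, A q = lsum (fun _ => (1:ℝ)) A := by
            rw [lsum_eq_sum (Finset.Subset.refl _)]; simp
          rw [h1, hAdef, lsum_mapDomain]
          show lsum (fun _ => (1:ℝ)) g1 = delivered g s a
          rw [hg1def, lsum_filter]
          show lsum (fun q => if P1 q then (1:ℝ) else 0) g = delivered g s a
          rw [delivered_eq]
          have he : (fun q => if P1 q then (1:ℝ) else 0) = ind s a :=
            funext fun q => (hindP1 q).symm
          rw [he]
        have hmassB : ∑ q ∈ B.support, B q = delivered g a t := by
          have h1 : ∑ q ∈ B.support, B q = lsum (fun _ => (1:ℝ)) B := by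
            rw [lsum_eq_sum (Finset.Subset.refl _)]; simp
          rw [h1, hBdef, lsum_mapDomain]
          show lsum (fun _ => (1:ℝ)) g2 = delivered g a t
          rw [hg2def, lsum_filter]
          show lsum (fun q => if P2 q then (1:ℝ) else 0) g = delivered g a t
          rw [delivered_eq]
          have he : (fun q => if P2 q then (1:ℝ) else 0) = ind a t :=
            funext fun q => (hindP2 q).symm
          rw [he]
        have hlA : ∀ u v, ∑ q ∈ A.support, A q * (edgeCount u v q : ℝ)
            = lsum (fun q => (edgeCount u v q : ℝ)) g1 := by
          intro u v
          rw [← lsum_eq_sum (Finset.Subset.refl _), hAdef, lsum_mapDomain]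
          show lsum (fun q => (edgeCount u v (orient s q) : ℝ)) g1 = _
          have he : (fun q => (edgeCount u v (orient s q) : ℝ))
              = fun q => (edgeCount u v q : ℝ) :=
            funext fun q => by rw [orient_edgeCount]
          rw [he]
        have hlB : ∀ u v, ∑ q ∈ B.support, B q * (edgeCount u v q : ℝ)
            = lsum (fun q => (edgeCount u v q : ℝ)) g2 := by
          intro u v
          rw [← lsum_eq_sum (Finset.Subset.refl _), hBdef, lsum_mapDomain]
          show lsum (fun q => (edgeCount u v (orient a q) : ℝ)) g2 = _
          have he : (fun q => (edgeCount u v (orient a q) : ℝ))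
              = fun q => (edgeCount u v q : ℝ) :=
            funext fun q => by rw [orient_edgeCount]
          rw [he]
        set C := A.sum (fun q1 x => B.sum (fun q2 y =>
          Finsupp.single (q1 ++ q2.tail)
            (x * y * m / (delivered g s a * delivered g a t)))) with hCdef
        have hlsumC : ∀ φ : List V → ℝ, lsum φ C = ∑ q1 ∈ A.support, ∑ q2 ∈ B.support,
            (A q1 * B q2 * m / (delivered g s a * delivered g a t)) * φ (q1 ++ q2.tail) := by
          intro φ
          rw [hCdef]
          simp only [fsum_eq, lsum_finset_sum, lsum_single]
        have hCoeff : ∀ q1 q2 : List V,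
            0 ≤ A q1 * B q2 * m / (delivered g s a * delivered g a t) := fun q1 q2 =>
          div_nonneg (mul_nonneg (mul_nonneg (hAnn q1) (hBnn q2)) hm0.le)
            (mul_nonneg hV1pos.le hV2pos.le)
        have hCapp : ∀ q, C q = ∑ q1 ∈ A.support, ∑ q2 ∈ B.support,
            (Finsupp.single (q1 ++ q2.tail)
              (A q1 * B q2 * m / (delivered g s a * delivered g a t))) q := by
          intro q
          rw [hCdef]
          simp only [fsum_eq, Finset.sum_apply', Finsupp.sum_apply]
        have hCnn : ∀ q, 0 ≤ C q := by
          intro q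
          rw [hCapp]
          refine Finset.sum_nonneg fun q1 _ => Finset.sum_nonneg fun q2 _ => ?_
          rw [Finsupp.single_apply]
          split
          · exact hCoeff q1 q2
          · exact le_refl 0
        have hCsupp : ∀ q, C q ≠ 0 → isPathFrom s t q := by
          intro q hq
          rw [hCapp] at hq
          obtain ⟨q1, hq1, hne1⟩ := Finset.exists_ne_zero_of_sum_ne_zero hq
          obtain ⟨q2, hq2, hne2⟩ := Finset.exists_ne_zero_of_sum_ne_zero hne1
          have hqeq : q = q1 ++ q2.tail := by
            by_contra hc
            rw [Finsupp.single_apply, if_neg (fun e => hc e.symm)] at hne2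
            exact hne2 rfl
          rw [hqeq]
          exact concat_path (hApath q1 hq1) (hBpath q2 hq2) hat
        set gg := g - (m / delivered g s a) • g1 - (m / delivered g a t) • g2 + C with hggdef
        have hggapply : ∀ q, gg q = g q - (m / delivered g s a) * g1 q
            - (m / delivered g a t) * g2 q + C q := by
          intro q
          rw [hggdef]
          simp [Finsupp.add_apply, Finsupp.sub_apply, Finsupp.smul_apply]
        have hP12 : ∀ q, P1 q → P2 q → False := by
          intro q hq1 hq2
          rw [hP1def] at hq1
          rw [hP2def] at hq2
          rcases hq1 with h1 | h1 <;> rcases hq2 with h2 | h2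
          · exact has (pathFrom_unique h1 h2).1.symm
          · exact hst (pathFrom_unique h1 h2).1
          · exact hst (pathFrom_unique h1 h2).2
          · exact hat (pathFrom_unique h1 h2).1
        have hggnn : ∀ q, 0 ≤ gg q := by
          intro q
          rw [hggapply]
          have hCq := hCnn q
          have hg1q : g1 q = if P1 q then g q else 0 := by rw [hg1def]; rfl
          have hg2q : g2 q = if P2 q then g q else 0 := by rw [hg2def]; rfl
          by_cases h1 : P1 q
          · have h2 : ¬ P2 q := fun h2 => hP12 q h1 h2
            rw [hg1q, hg2q, if_pos h1, if_neg h2]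
            have hr1 : m / delivered g s a ≤ 1 := (div_le_one hV1pos).mpr hmV1
            have hmul := mul_le_mul_of_nonneg_right hr1 (hg.1 q)
            linarith [hg.1 q]
          · by_cases h2 : P2 q
            · rw [hg1q, hg2q, if_neg h1, if_pos h2]
              have hr2 : m / delivered g a t ≤ 1 := (div_le_one hV2pos).mpr hmV2
              have hmul := mul_le_mul_of_nonneg_right hr2 (hg.1 q)
              linarith [hg.1 q]
            · rw [hg1q, hg2q, if_neg h1, if_neg h2]
              have := hg.1 q
              linarith
        have hloadC : ∀ u v, lsum (fun q => (edgeCount u v q : ℝ)) C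
            = (m / delivered g s a) * lsum (fun q => (edgeCount u v q : ℝ)) g1
            + (m / delivered g a t) * lsum (fun q => (edgeCount u v q : ℝ)) g2 := by
          intro u v
          have hsum1 : lsum (fun q => (edgeCount u v q : ℝ)) C
              = ∑ q1 ∈ A.support, ∑ q2 ∈ B.support,
                ((m / (delivered g s a * delivered g a t))
                    * ((A q1 * (edgeCount u v q1 : ℝ)) * B q2)
                  + (m / (delivered g s a * delivered g a t))
                    * (A q1 * (B q2 * (edgeCount u v q2 : ℝ)))) := by
            rw [hlsumC]
            refine Finset.sum_congr rfl fun q1 h1 => Finset.sum_congr rfl fun q2 h2 => ?_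
            rw [concat_count u v (hApath q1 h1) (hBpath q2 h2)]
            push_cast
            ring
          rw [hsum1]
          have hsplit : ∀ q1 ∈ A.support, (∑ q2 ∈ B.support,
              ((m / (delivered g s a * delivered g a t))
                  * ((A q1 * (edgeCount u v q1 : ℝ)) * B q2)
                + (m / (delivered g s a * delivered g a t))
                  * (A q1 * (B q2 * (edgeCount u v q2 : ℝ)))))
              = (∑ q2 ∈ B.support, (m / (delivered g s a * delivered g a t))
                  * ((A q1 * (edgeCount u v q1 : ℝ)) * B q2))
                + (∑ q2 ∈ B.support, (m / (delivered g s a * delivered g a t))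
                  * (A q1 * (B q2 * (edgeCount u v q2 : ℝ)))) :=
            fun q1 _ => Finset.sum_add_distrib
          rw [Finset.sum_congr rfl hsplit, Finset.sum_add_distrib]
          have e1 : ∑ q1 ∈ A.support, ∑ q2 ∈ B.support,
              (m / (delivered g s a * delivered g a t))
                * ((A q1 * (edgeCount u v q1 : ℝ)) * B q2)
            = (m / (delivered g s a * delivered g a t))
              * ((∑ q1 ∈ A.support, A q1 * (edgeCount u v q1 : ℝ))
                * (∑ q2 ∈ B.support, B q2)) := by
            rw [Finset.sum_mul_sum, Finset.mul_sum]
            exact Finset.sum_congr rfl fun q1 _ => by rw [Finset.mul_sum]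
          have e2 : ∑ q1 ∈ A.support, ∑ q2 ∈ B.support,
              (m / (delivered g s a * delivered g a t))
                * (A q1 * (B q2 * (edgeCount u v q2 : ℝ)))
            = (m / (delivered g s a * delivered g a t))
              * ((∑ q1 ∈ A.support, A q1)
                * (∑ q2 ∈ B.support, B q2 * (edgeCount u v q2 : ℝ))) := by
            rw [Finset.sum_mul_sum, Finset.mul_sum]
            exact Finset.sum_congr rfl fun q1 _ => by rw [Finset.mul_sum]
          rw [e1, e2, hlA u v, hlB u v, hmassA, hmassB]
          field_simp
        have hggload : ∀ u v, edgeLoad gg u v ≤ cb u v := by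
          intro u v
          have heq : edgeLoad gg u v = edgeLoad g u v := by
            simp only [edgeLoad_eq]
            rw [hggdef, lsum_add, lsum_sub, lsum_sub, lsum_smul, lsum_smul, hloadC u v]
            ring
          rw [heq]; exact hg.2.1 u v
        have hggsupp : ∀ q ∈ gg.support, ∃ s' ∈ T, ∃ t' ∈ T, isPathFrom s' t' q := by
          intro q hq
          by_cases hgq : q ∈ g.support
          · exact hg.2.2 q hgq
          · have hgq0 : g q = 0 := Finsupp.notMem_support_iff.mp hgq
            have h1 : g1 q = 0 := by
              rw [hg1def, Finsupp.filter_apply]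
              split <;> simp [hgq0]
            have h2 : g2 q = 0 := by
              rw [hg2def, Finsupp.filter_apply]
              split <;> simp [hgq0]
            have hC : C q ≠ 0 := by
              intro hc
              apply Finsupp.mem_support_iff.mp hq
              rw [hggapply, hgq0, h1, h2, hc]
              ring
            exact ⟨s, hsT, t, htT, hCsupp q hC⟩
        have hdec : ∀ s' t', delivered gg s' t' = delivered g s' t'
            - (m / delivered g s a) * lsum (ind s' t') g1
            - (m / delivered g a t) * lsum (ind s' t') g2 + lsum (ind s' t') C := by
          intro s' t'
          rw [hggdef, delivered_eq, lsum_add, lsum_sub, lsum_sub, lsum_smul, lsum_smul,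
            ← delivered_eq]
        have hL1zero : ∀ s' t', ¬(s' = s ∧ t' = a) → ¬(s' = a ∧ t' = s) →
            lsum (ind s' t') g1 = 0 := by
          intro s' t' hA1 hB1
          rw [hg1def, lsum_filter]
          have hfz : (fun q => if P1 q then ind s' t' q else 0) = fun _ => (0:ℝ) := by
            funext q
            by_cases hq : P1 q
            · rw [if_pos hq]
              rw [hP1def] at hq
              rcases hq with hq | hq
              · exact ind_eq_zero hq hA1 hB1
              · exact ind_eq_zero hq hB1 hA1
            · rw [if_neg hq]
          rw [hfz]
          simp [lsum, Finsupp.sum]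
        have hL2zero : ∀ s' t', ¬(s' = a ∧ t' = t) → ¬(s' = t ∧ t' = a) →
            lsum (ind s' t') g2 = 0 := by
          intro s' t' hA1 hB1
          rw [hg2def, lsum_filter]
          have hfz : (fun q => if P2 q then ind s' t' q else 0) = fun _ => (0:ℝ) := by
            funext q
            by_cases hq : P2 q
            · rw [if_pos hq]
              rw [hP2def] at hq
              rcases hq with hq | hq
              · exact ind_eq_zero hq hA1 hB1
              · exact ind_eq_zero hq hB1 hA1
            · rw [if_neg hq]
          rw [hfz]
          simp [lsum, Finsupp.sum]
        have hg1full : ∀ s' t', ((s' = s ∧ t' = a) ∨ (s' = a ∧ t' = s)) →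
            lsum (ind s' t') g1 = delivered g s a := by
          intro s' t' hc
          have hie : ind s' t' = ind s a := by
            rcases hc with ⟨he1, he2⟩ | ⟨he1, he2⟩
            · rw [he1, he2]
            · rw [he1, he2]; funext q; exact ind_comm a s q
          rw [hie, hg1def, lsum_filter]
          have hfe : (fun q => if P1 q then ind s a q else 0) = ind s a := by
            funext q
            by_cases hq : P1 q
            · rw [if_pos hq]
            · rw [if_neg hq, hindP1 q, if_neg hq]
          rw [hfe, ← delivered_eq]
        have hg2full : ∀ s' t', ((s' = a ∧ t' = t) ∨ (s' = t ∧ t' = a)) →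
            lsum (ind s' t') g2 = delivered g a t := by
          intro s' t' hc
          have hie : ind s' t' = ind a t := by
            rcases hc with ⟨he1, he2⟩ | ⟨he1, he2⟩
            · rw [he1, he2]
            · rw [he1, he2]; funext q; exact ind_comm t a q
          rw [hie, hg2def, lsum_filter]
          have hfe : (fun q => if P2 q then ind a t q else 0) = ind a t := by
            funext q
            by_cases hq : P2 q
            · rw [if_pos hq]
            · rw [if_neg hq, hindP2 q, if_neg hq]
          rw [hfe, ← delivered_eq]
        have hCm : ∀ s' t', ((s' = s ∧ t' = t) ∨ (s' = t ∧ t' = s)) →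
            lsum (ind s' t') C = m := by
          intro s' t' hc
          rw [hlsumC]
          have hone : ∀ q1 ∈ A.support, ∀ q2 ∈ B.support,
              ind s' t' (q1 ++ q2.tail) = 1 := by
            intro q1 h1 q2 h2
            have hpc := concat_path (hApath q1 h1) (hBpath q2 h2) hat
            rcases hc with ⟨rfl, rfl⟩ | ⟨rfl, rfl⟩
            · exact ind_eq_one_left hpc
            · exact ind_eq_one_right hpc
          have hconst : ∀ q1 ∈ A.support, (∑ q2 ∈ B.support,
              (A q1 * B q2 * m / (delivered g s a * delivered g a t))
                * ind s' t' (q1 ++ q2.tail))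
              = ∑ q2 ∈ B.support, (m / (delivered g s a * delivered g a t))
                * (A q1 * B q2) := by
            intro q1 h1
            refine Finset.sum_congr rfl fun q2 h2 => ?_
            rw [hone q1 h1 q2 h2, mul_one]
            ring
          rw [Finset.sum_congr rfl hconst]
          have e3 : ∑ q1 ∈ A.support, ∑ q2 ∈ B.support,
              (m / (delivered g s a * delivered g a t)) * (A q1 * B q2)
            = (m / (delivered g s a * delivered g a t))
              * ((∑ q1 ∈ A.support, A q1) * (∑ q2 ∈ B.support, B q2)) := by
            rw [Finset.sum_mul_sum, Finset.mul_sum]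
            exact Finset.sum_congr rfl fun q1 _ => by rw [Finset.mul_sum]
          rw [e3, hmassA, hmassB]
          field_simp
        have hCnonneg : ∀ s' t', 0 ≤ lsum (ind s' t') C := by
          intro s' t'
          rw [hlsumC]
          exact Finset.sum_nonneg fun q1 _ => Finset.sum_nonneg fun q2 _ =>
            mul_nonneg (hCoeff q1 q2) (ind_nonneg _ _ _)
        refine ⟨gg, ⟨hggnn, hggload, hggsupp⟩, ?_⟩
        intro s' hs' t' ht' hne
        rw [div_le_iff₀ hρ0]
        have hdecst := hdec s' t'
        have hineq := hdel_ineq s' t' hs' ht' hne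
        have hdfst := hdf' s' t'
        have hρL := mul_nonneg hρ0.le (hCnonneg s' t')
        by_cases c1 : (s' = s ∧ t' = t) ∨ (s' = t ∧ t' = s)
        · have e_p : ind s' t' p = 1 := by
            rcases c1 with ⟨rfl, rfl⟩ | ⟨rfl, rfl⟩
            · exact ind_eq_one_left hpath
            · exact ind_eq_one_right hpath
          have e_p1 : ind s' t' p1 = 0 := by
            refine ind_eq_zero hp1path ?_ ?_
            · rcases c1 with ⟨rfl, rfl⟩ | ⟨rfl, rfl⟩
              · exact fun hc => hat hc.2.symm
              · exact fun hc => hst hc.1.symm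
            · rcases c1 with ⟨rfl, rfl⟩ | ⟨rfl, rfl⟩
              · exact fun hc => has hc.1.symm
              · exact fun hc => hat hc.1.symm
          have e_p2 : ind s' t' p2 = 0 := by
            refine ind_eq_zero hp2path ?_ ?_
            · rcases c1 with ⟨rfl, rfl⟩ | ⟨rfl, rfl⟩
              · exact fun hc => has hc.1.symm
              · exact fun hc => hat hc.1.symm
            · rcases c1 with ⟨rfl, rfl⟩ | ⟨rfl, rfl⟩
              · exact fun hc => hst hc.1
              · exact fun hc => has hc.2.symm
          have eL1 : lsum (ind s' t') g1 = 0 := by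
            refine hL1zero s' t' ?_ ?_
            · rcases c1 with ⟨rfl, rfl⟩ | ⟨rfl, rfl⟩
              · exact fun hc => hat hc.2.symm
              · exact fun hc => hst hc.1.symm
            · rcases c1 with ⟨rfl, rfl⟩ | ⟨rfl, rfl⟩
              · exact fun hc => has hc.1.symm
              · exact fun hc => hat hc.1.symm
          have eL2 : lsum (ind s' t') g2 = 0 := by
            refine hL2zero s' t' ?_ ?_
            · rcases c1 with ⟨rfl, rfl⟩ | ⟨rfl, rfl⟩
              · exact fun hc => has hc.1.symm
              · exact fun hc => hat hc.1.symm
            · rcases c1 with ⟨rfl, rfl⟩ | ⟨rfl, rfl⟩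
              · exact fun hc => hst hc.1
              · exact fun hc => has hc.2.symm
          have eC : lsum (ind s' t') C = m := hCm s' t' c1
          rw [e_p, e_p1, e_p2] at hdfst
          rw [eL1, eL2, eC] at hdecst
          rw [hdecst]
          linarith [hdfst, hineq, hrm]
        · by_cases c2 : (s' = s ∧ t' = a) ∨ (s' = a ∧ t' = s)
          · have e_p : ind s' t' p = 0 := by
              refine ind_eq_zero hpath ?_ ?_
              · rcases c2 with ⟨rfl, rfl⟩ | ⟨rfl, rfl⟩
                · exact fun hc => hat hc.2
                · exact fun hc => has hc.1
              · rcases c2 with ⟨rfl, rfl⟩ | ⟨rfl, rfl⟩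
                · exact fun hc => hst hc.1
                · exact fun hc => hat hc.1
            have e_p1 : ind s' t' p1 = 1 := by
              rcases c2 with ⟨rfl, rfl⟩ | ⟨rfl, rfl⟩
              · exact ind_eq_one_left hp1path
              · exact ind_eq_one_right hp1path
            have e_p2 : ind s' t' p2 = 0 := by
              refine ind_eq_zero hp2path ?_ ?_
              · rcases c2 with ⟨rfl, rfl⟩ | ⟨rfl, rfl⟩
                · exact fun hc => has hc.1.symm
                · exact fun hc => hst hc.2
              · rcases c2 with ⟨rfl, rfl⟩ | ⟨rfl, rfl⟩
                · exact fun hc => hst hc.1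
                · exact fun hc => hat hc.1
            have eL1 : lsum (ind s' t') g1 = delivered g s a := hg1full s' t' c2
            have eL2 : lsum (ind s' t') g2 = 0 := by
              refine hL2zero s' t' ?_ ?_
              · rcases c2 with ⟨rfl, rfl⟩ | ⟨rfl, rfl⟩
                · exact fun hc => has hc.1.symm
                · exact fun hc => hst hc.2
              · rcases c2 with ⟨rfl, rfl⟩ | ⟨rfl, rfl⟩
                · exact fun hc => hst hc.1
                · exact fun hc => hat hc.1
            rw [e_p, e_p1, e_p2] at hdfst
            rw [eL1, eL2] at hdecst
            have hdiv : m / delivered g s a * delivered g s a = m :=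
              div_mul_cancel₀ m hV1pos.ne'
            rw [hdiv] at hdecst
            rw [hdecst]
            linarith [hdfst, hineq, hrm, hρL]
          · by_cases c3 : (s' = a ∧ t' = t) ∨ (s' = t ∧ t' = a)
            · have e_p : ind s' t' p = 0 := by
                refine ind_eq_zero hpath ?_ ?_
                · rcases c3 with ⟨rfl, rfl⟩ | ⟨rfl, rfl⟩
                  · exact fun hc => has hc.1
                  · exact fun hc => hst hc.1.symm
                · rcases c3 with ⟨rfl, rfl⟩ | ⟨rfl, rfl⟩
                  · exact fun hc => hat hc.1
                  · exact fun hc => has hc.2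
              have e_p1 : ind s' t' p1 = 0 := by
                refine ind_eq_zero hp1path ?_ ?_
                · rcases c3 with ⟨rfl, rfl⟩ | ⟨rfl, rfl⟩
                  · exact fun hc => has hc.1
                  · exact fun hc => hst hc.1.symm
                · rcases c3 with ⟨rfl, rfl⟩ | ⟨rfl, rfl⟩
                  · exact fun hc => hst hc.2.symm
                  · exact fun hc => hat hc.1.symm
              have e_p2 : ind s' t' p2 = 1 := by
                rcases c3 with ⟨rfl, rfl⟩ | ⟨rfl, rfl⟩
                · exact ind_eq_one_left hp2path
                · exact ind_eq_one_right hp2path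
              have eL1 : lsum (ind s' t') g1 = 0 := by
                refine hL1zero s' t' ?_ ?_
                · rcases c3 with ⟨rfl, rfl⟩ | ⟨rfl, rfl⟩
                  · exact fun hc => has hc.1
                  · exact fun hc => hst hc.1.symm
                · rcases c3 with ⟨rfl, rfl⟩ | ⟨rfl, rfl⟩
                  · exact fun hc => hst hc.2.symm
                  · exact fun hc => hat hc.1.symm
              have eL2 : lsum (ind s' t') g2 = delivered g a t := hg2full s' t' c3
              rw [e_p, e_p1, e_p2] at hdfst
              rw [eL1, eL2] at hdecst
              have hdiv : m / delivered g a t * delivered g a t = m :=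
                div_mul_cancel₀ m hV2pos.ne'
              rw [hdiv] at hdecst
              rw [hdecst]
              linarith [hdfst, hineq, hrm, hρL]
            · have e_p : ind s' t' p = 0 := ind_eq_zero hpath
                (fun hc => c1 (Or.inl hc)) (fun hc => c1 (Or.inr hc))
              have e_p1 : ind s' t' p1 = 0 := ind_eq_zero hp1path
                (fun hc => c2 (Or.inl hc)) (fun hc => c2 (Or.inr hc))
              have e_p2 : ind s' t' p2 = 0 := ind_eq_zero hp2path
                (fun hc => c3 (Or.inl hc)) (fun hc => c3 (Or.inr hc))
              have eL1 : lsum (ind s' t') g1 = 0 := hL1zero s' t'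
                (fun hc => c2 (Or.inl hc)) (fun hc => c2 (Or.inr hc))
              have eL2 : lsum (ind s' t') g2 = 0 := hL2zero s' t'
                (fun hc => c3 (Or.inl hc)) (fun hc => c3 (Or.inr hc))
              rw [e_p, e_p1, e_p2] at hdfst
              rw [eL1, eL2] at hdecst
              rw [hdecst]
              linarith [hdfst, hineq, hρL]

/-- Splicing Lemma. -/
theorem splicing_lemma
    {V : Type*} (ca cb : V → V → ℝ) (T : Set V) (ρ : ℝ) (hρ : 1 ≤ ρ)
    (h : ∀ d : V → V → ℝ, (∀ s t, 0 ≤ d s t) →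
      RoutableTF ca T d → Routable cb T (fun s t => d s t / ρ)) :
    ∀ d : V → V → ℝ, (∀ s t, 0 ≤ d s t) →
      Routable ca T d → Routable cb T (fun s t => d s t / ρ) := by
  have hρ0 : (0:ℝ) < ρ := lt_of_lt_of_le one_pos hρ
  intro d hd hr
  obtain ⟨f, hf, hdel⟩ := hr
  obtain ⟨g, hg, hgd⟩ :=
    Splice.key ca cb T ρ hρ h (∑ p ∈ f.support, Splice.icount T p) f hf le_rfl
  refine ⟨g, hg, fun s hs t ht hst => ?_⟩
  calc d s t / ρ ≤ delivered f s t / ρ :=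
        div_le_div_of_nonneg_right (hdel s hs t ht hst) hρ0.le
    _ ≤ delivered g s t := hgd s hs t ht hst
end
end

section
/- In a quasi-bipartite network where both the terminals T and the non-terminals form independent sets, the minimum cut separating a terminal bipartition (S, T∖S) equals Σ_{v ∉ T} min{ Σ_{s∈S} c_{sv}, Σ_{t∈T∖S} c_{vt} }. -/
open Classical Finset
noncomputable section

/-- Capacity of the cut induced by a vertex set `A` (each undirected crossing edge
is counted once, via the orientation from inside `A` to outside). -/
def cutCap {V : Type*} [Fintype V] (c : V → V → ℝ) (A : Set V) : ℝ :=
  ∑ u, ∑ v, if u ∈ A ∧ v ∉ A then c u v else 0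

/-- Minimum capacity of a cut whose side contains `A` and avoids `B`. -/
def mincutT {V : Type*} [Fintype V] (c : V → V → ℝ) (A B : Set V) : ℝ :=
  sInf {x : ℝ | ∃ X : Set V, A ⊆ X ∧ Disjoint X B ∧ x = cutCap c X}

/-- closed form for terminal-bipartition min-cuts in quasi-bipartite
networks in which both the terminals and the non-terminals are independent sets. -/
theorem quasibipartite_mincut
    {V : Type*} [Fintype V] (c : V → V → ℝ) (T : Set V)
    (hsym : ∀ u v, c u v = c v u) (hnn : ∀ u v, 0 ≤ c u v)
    (hqb : ∀ u v, c u v ≠ 0 → (u ∈ T ∧ v ∉ T) ∨ (u ∉ T ∧ v ∈ T))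
    (S : Set V) (hS : S ⊆ T) :
    mincutT c S (T \ S) =
      ∑ v, if v ∉ T then
        min (∑ s, if s ∈ S then c s v else 0)
            (∑ t, if t ∈ T \ S then c v t else 0)
      else 0 := by
  classical
  set A : V → ℝ := fun v => ∑ s, if s ∈ S then c s v else 0 with hA
  set B : V → ℝ := fun v => ∑ t, if t ∈ T \ S then c v t else 0 with hB
  -- evaluation of cutCap on feasible X
  have key : ∀ X : Set V, S ⊆ X → Disjoint X (T \ S) →
      cutCap c X = ∑ v, if v ∉ T then (if v ∈ X then B v else A v) else 0 := by
    intro X h1 h2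
    have hXT : ∀ u, u ∈ T → (u ∈ X ↔ u ∈ S) := by
      intro u hu
      constructor
      · intro hx
        by_contra hs
        exact Set.disjoint_left.mp h2 hx ⟨hu, hs⟩
      · exact fun hs => h1 hs
    have step1 : ∀ u v, (if u ∈ X ∧ v ∉ X then c u v else 0)
        = (if (v ∉ T ∧ v ∉ X) then (if u ∈ S then c u v else 0) else 0)
        + (if (u ∉ T ∧ u ∈ X) then (if v ∈ T \ S then c u v else 0) else 0) := by
      intro u v
      by_cases hc : c u v = 0
      · split_ifs <;> simp [hc]
      · rcases hqb u v hc with ⟨hu, hv⟩ | ⟨hu, hv⟩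
        · -- u ∈ T, v ∉ T : second summand is 0
          have huX := hXT u hu
          simp only [Set.mem_diff]
          rw [if_neg (fun h : u ∉ T ∧ u ∈ X => h.1 hu), add_zero]
          by_cases hvx : v ∈ X
          · rw [if_neg (fun h : u ∈ X ∧ v ∉ X => h.2 hvx),
              if_neg (fun h : v ∉ T ∧ v ∉ X => h.2 hvx)]
          · rw [if_pos (show v ∉ T ∧ v ∉ X from ⟨hv, hvx⟩)]
            by_cases hus : u ∈ S
            · rw [if_pos (show u ∈ X ∧ v ∉ X from ⟨huX.mpr hus, hvx⟩), if_pos hus]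
            · rw [if_neg (fun h : u ∈ X ∧ v ∉ X => hus (huX.mp h.1)), if_neg hus]
        · -- u ∉ T, v ∈ T : first summand is 0
          have hvX := hXT v hv
          simp only [Set.mem_diff]
          rw [if_neg (fun h : v ∉ T ∧ v ∉ X => h.1 hv), zero_add]
          by_cases hvs : v ∈ S
          · have hvx : v ∈ X := h1 hvs
            rw [if_neg (fun h : u ∈ X ∧ v ∉ X => h.2 hvx)]
            by_cases hux : u ∈ X
            · rw [if_pos (show u ∉ T ∧ u ∈ X from ⟨hu, hux⟩),
                if_neg (fun h : v ∈ T ∧ v ∉ S => h.2 hvs)]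
            · rw [if_neg (fun h : u ∉ T ∧ u ∈ X => hux h.2)]
          · have hvx : v ∉ X := fun h => hvs (hvX.mp h)
            by_cases hux : u ∈ X
            · rw [if_pos (show u ∈ X ∧ v ∉ X from ⟨hux, hvx⟩),
                if_pos (show u ∉ T ∧ u ∈ X from ⟨hu, hux⟩),
                if_pos (show v ∈ T ∧ v ∉ S from ⟨hv, hvs⟩)]
            · rw [if_neg (fun h : u ∈ X ∧ v ∉ X => hux h.1),
                if_neg (fun h : u ∉ T ∧ u ∈ X => hux h.2)]
    unfold cutCap
    calc (∑ u, ∑ v, if u ∈ X ∧ v ∉ X then c u v else 0)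
        = ∑ u, ∑ v, ((if (v ∉ T ∧ v ∉ X) then (if u ∈ S then c u v else 0) else 0)
          + (if (u ∉ T ∧ u ∈ X) then (if v ∈ T \ S then c u v else 0) else 0)) := by
          refine Finset.sum_congr rfl fun u _ => Finset.sum_congr rfl fun v _ => step1 u v
      _ = (∑ u, ∑ v, (if (v ∉ T ∧ v ∉ X) then (if u ∈ S then c u v else 0) else 0))
          + (∑ u, ∑ v, (if (u ∉ T ∧ u ∈ X) then (if v ∈ T \ S then c u v else 0) else 0)) := by
          rw [← Finset.sum_add_distrib]
          exact Finset.sum_congr rfl fun u _ => Finset.sum_add_distrib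
      _ = (∑ v, if (v ∉ T ∧ v ∉ X) then A v else 0)
          + (∑ u, if (u ∉ T ∧ u ∈ X) then B u else 0) := by
          congr 1
          · rw [Finset.sum_comm]
            refine Finset.sum_congr rfl fun v _ => ?_
            by_cases h : v ∉ T ∧ v ∉ X <;> simp [h, hA]
          · refine Finset.sum_congr rfl fun u _ => ?_
            by_cases h : u ∉ T ∧ u ∈ X <;> simp [h, hB]
      _ = ∑ v, if v ∉ T then (if v ∈ X then B v else A v) else 0 := by
          rw [← Finset.sum_add_distrib]
          refine Finset.sum_congr rfl fun v _ => ?_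
          by_cases h1 : v ∈ T <;> by_cases h2 : v ∈ X <;> simp [h1, h2]
  set X₀ : Set V := S ∪ {v | v ∉ T ∧ B v ≤ A v} with hX₀
  have hsub : S ⊆ X₀ := Set.subset_union_left
  have hdis : Disjoint X₀ (T \ S) := by
    rw [Set.disjoint_left]
    rintro x (hx | hx) ⟨hxT, hxS⟩
    · exact hxS hx
    · exact hx.1 hxT
  have hval : cutCap c X₀ = ∑ v, if v ∉ T then min (A v) (B v) else 0 := by
    rw [key X₀ hsub hdis]
    refine Finset.sum_congr rfl fun v _ => ?_
    by_cases hvT : v ∈ T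
    · simp [hvT]
    · have hmem : v ∈ X₀ ↔ B v ≤ A v := by
        constructor
        · rintro (h | h)
          · exact absurd (hS h) hvT
          · exact h.2
        · intro h; exact Or.inr ⟨hvT, h⟩
      by_cases hle : B v ≤ A v
      · simp [hvT, hmem.mpr hle, min_eq_right hle]
      · have hvx : v ∉ X₀ := fun h => hle (hmem.mp h)
        have : A v ≤ B v := le_of_not_ge hle
        simp [hvT, hvx, min_eq_left this]
  have hlb : ∀ x ∈ {x : ℝ | ∃ X : Set V, S ⊆ X ∧ Disjoint X (T \ S) ∧ x = cutCap c X},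
      (∑ v, if v ∉ T then min (A v) (B v) else 0) ≤ x := by
    rintro x ⟨X, h1, h2, rfl⟩
    rw [key X h1 h2]
    refine Finset.sum_le_sum fun v _ => ?_
    by_cases hvT : v ∈ T
    · simp [hvT]
    · by_cases hvx : v ∈ X
      · simp [hvT, hvx, min_le_right]
      · simp [hvT, hvx, min_le_left]
  have hmem : (∑ v, if v ∉ T then min (A v) (B v) else 0)
      ∈ {x : ℝ | ∃ X : Set V, S ⊆ X ∧ Disjoint X (T \ S) ∧ x = cutCap c X} :=
    ⟨X₀, hsub, hdis, hval.symm⟩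
  have : mincutT c S (T \ S) = ∑ v, if v ∉ T then min (A v) (B v) else 0 := by
    unfold mincutT
    refine le_antisymm (csInf_le ⟨_, hlb⟩ hmem) (le_csInf ⟨_, hmem⟩ hlb)
  simpa [hA, hB] using this
end
end

section
/- (Cut-to-flow transfer) Let G' be a quality-β cut-sparsifier of the k-terminal network G. Then for every demand-support graph H on the terminals and every nonzero demand d supported on E(H): 1/γ(G',H) ≤ λ_{G'}(d)/λ_G(d) ≤ β·γ(G,H). Consequently, G' with capacities scaled by γ(G',H) is a flow-sparsifier of G with quality β·γ(G,H)·γ(G',H) for demands supported on H. -/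
open Classical Finset
noncomputable section

/-- Total demand separated by the vertex set `A`. -/
def sepDem {V : Type*} [Fintype V] (d : V → V → ℝ) (A : Set V) : ℝ :=
  ∑ u, ∑ v, if u ∈ A ∧ v ∉ A then d u v else 0

/-- Sparsity `Φ_G(d)`: the minimum ratio of cut capacity to separated demand. -/
def sparsity {V : Type*} [Fintype V] (c d : V → V → ℝ) : ℝ :=
  sInf {x : ℝ | ∃ A : Set V, 0 < sepDem d A ∧ x = cutCap c A / sepDem d A}

section Aux
variable {V : Type*}

lemma exists_crossing (X : Set V) :
    ∀ (p : List V) (s t : V), p.head? = some s → p.getLast? = some t →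
      s ∈ X → t ∉ X → ∃ a b, (a, b) ∈ p.zip p.tail ∧ a ∈ X ∧ b ∉ X := by
  intro p
  induction p with
  | nil => intro s t hs; simp at hs
  | cons a q ih =>
    intro s t hs ht hsX htX
    simp only [List.head?_cons, Option.some.injEq] at hs
    subst hs
    match q with
    | [] =>
      simp only [List.getLast?_singleton, Option.some.injEq] at ht
      subst ht; exact absurd hsX htX
    | b :: r =>
      by_cases hbX : b ∈ X
      · obtain ⟨a', b', hmem, h1, h2⟩ := ih b t rfl (by rw [← List.getLast?_cons_cons]; exact ht) hbX htX
        refine ⟨a', b', ?_, h1, h2⟩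
        simp only [List.tail_cons, List.zip_cons_cons] at hmem ⊢
        exact List.mem_cons_of_mem _ hmem
      · exact ⟨a, b, by simp, hsX, hbX⟩

lemma one_le_edgeCount {a b : V} {p : List V} (h : (a, b) ∈ p.zip p.tail) :
    1 ≤ edgeCount a b p ∧ 1 ≤ edgeCount b a p := by
  constructor <;>
  · rw [edgeCount, Nat.one_le_iff_ne_zero, ← Nat.pos_iff_ne_zero, List.countP_pos_iff]
    exact ⟨(a, b), h, by simp⟩

lemma isPathFrom_eq {s t u v : V} {p : List V} (h1 : isPathFrom s t p) (h2 : isPathFrom u v p) :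
    s = u ∧ t = v := by
  obtain ⟨h1a, h1b⟩ := h1; obtain ⟨h2a, h2b⟩ := h2
  rw [h1a] at h2a; rw [h1b] at h2b
  exact ⟨(Option.some.injEq _ _ ▸ h2a).symm ▸ rfl, by injection h2b⟩

end Aux
section Aux2
variable {V : Type*} [Fintype V]

lemma key_path (X : Set V) (p : List V) :
    (∑ u : V, ∑ v : V, if (u ∈ X ∧ v ∉ X) ∧ (isPathFrom u v p ∨ isPathFrom v u p) then (1:ℝ) else 0)
      ≤ ∑ u : V, ∑ v : V, if u ∈ X ∧ v ∉ X then (edgeCount u v p : ℝ) else 0 := by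
  by_cases hex : ∃ u v, (u ∈ X ∧ v ∉ X) ∧ (isPathFrom u v p ∨ isPathFrom v u p)
  · obtain ⟨u₀, v₀, hsep₀, hpath₀⟩ := hex
    have huniq : ∀ u v, ((u ∈ X ∧ v ∉ X) ∧ (isPathFrom u v p ∨ isPathFrom v u p)) →
        u = u₀ ∧ v = v₀ := by
      rintro u v ⟨hsep, hpath⟩
      rcases hpath with h | h <;> rcases hpath₀ with h₀ | h₀
      · exact isPathFrom_eq h h₀
      · obtain ⟨rfl, rfl⟩ := isPathFrom_eq h h₀
        exact absurd hsep.1 hsep₀.2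
      · obtain ⟨rfl, rfl⟩ := isPathFrom_eq h h₀
        exact absurd hsep₀.1 hsep.2
      · obtain ⟨h1, h2⟩ := isPathFrom_eq h h₀
        exact ⟨h2.symm ▸ rfl, h1.symm ▸ rfl⟩
    have hub : (∑ u : V, ∑ v : V, if (u ∈ X ∧ v ∉ X) ∧ (isPathFrom u v p ∨ isPathFrom v u p)
        then (1:ℝ) else 0) ≤ 1 := by
      calc (∑ u : V, ∑ v : V, if (u ∈ X ∧ v ∉ X) ∧ (isPathFrom u v p ∨ isPathFrom v u p)
            then (1:ℝ) else 0)
          ≤ ∑ u : V, ∑ v : V, if u = u₀ ∧ v = v₀ then (1:ℝ) else 0 := by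
            refine Finset.sum_le_sum fun u _ => Finset.sum_le_sum fun v _ => ?_
            by_cases h : (u ∈ X ∧ v ∉ X) ∧ (isPathFrom u v p ∨ isPathFrom v u p)
            · rw [if_pos h, if_pos (huniq u v h)]
            · rw [if_neg h]; positivity
        _ = 1 := by simp [ite_and]
    have hlb : (1:ℝ) ≤ ∑ u : V, ∑ v : V, if u ∈ X ∧ v ∉ X then (edgeCount u v p : ℝ) else 0 := by
      obtain ⟨a, b, haX, hbX, hcnt⟩ : ∃ a b, a ∈ X ∧ b ∉ X ∧ 1 ≤ edgeCount a b p := by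
        rcases hpath₀ with h | h
        · obtain ⟨a, b, hm, h1, h2⟩ := exists_crossing X p u₀ v₀ h.1 h.2 hsep₀.1 hsep₀.2
          exact ⟨a, b, h1, h2, (one_le_edgeCount hm).1⟩
        · obtain ⟨a, b, hm, h1, h2⟩ := exists_crossing Xᶜ p v₀ u₀ h.1 h.2
            (by simpa using hsep₀.2) (by simpa using hsep₀.1)
          exact ⟨b, a, by simpa using h2, by simpa using h1, (one_le_edgeCount hm).2⟩
      have step1 : (1:ℝ) ≤ ∑ v : V, if a ∈ X ∧ v ∉ X then (edgeCount a v p : ℝ) else 0 := by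
        refine le_trans ?_ (Finset.single_le_sum (f := fun v => if a ∈ X ∧ v ∉ X
          then (edgeCount a v p : ℝ) else 0) (fun v _ => by positivity) (Finset.mem_univ b))
        show (1:ℝ) ≤ if a ∈ X ∧ b ∉ X then (edgeCount a b p : ℝ) else 0
        rw [if_pos ⟨haX, hbX⟩]; exact_mod_cast hcnt
      refine le_trans step1 (Finset.single_le_sum (f := fun u => ∑ v : V, if u ∈ X ∧ v ∉ X
        then (edgeCount u v p : ℝ) else 0) (fun u _ => Finset.sum_nonneg fun v _ => by positivity)
        (Finset.mem_univ a))
    linarith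
  · push_neg at hex
    have : (∑ u : V, ∑ v : V, if (u ∈ X ∧ v ∉ X) ∧ (isPathFrom u v p ∨ isPathFrom v u p)
        then (1:ℝ) else 0) = 0 := by
      refine Finset.sum_eq_zero fun u _ => Finset.sum_eq_zero fun v _ => ?_
      rw [if_neg]; rintro ⟨h1, h2⟩; rcases h2 with h2 | h2
      · exact (hex u v h1).1 h2
      · exact (hex u v h1).2 h2
    rw [this]
    exact Finset.sum_nonneg fun u _ => Finset.sum_nonneg fun v _ => by positivity

end Aux2
section Aux3
variable {V : Type*} [Fintype V]

lemma delivered_nonneg {f : List V →₀ ℝ} (hf : ∀ p, 0 ≤ f p) (s t : V) :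
    0 ≤ delivered f s t := by
  refine Finset.sum_nonneg fun p _ => ?_
  try dsimp only
  split_ifs
  · exact hf p
  · exact le_refl 0

lemma flowcut (c : V → V → ℝ) (hc : ∀ u v, 0 ≤ c u v) (T : Set V) (D : V → V → ℝ)
    (hD : ∀ s t, 0 ≤ D s t) (hDT : ∀ u v, u ≠ v → D u v ≠ 0 → u ∈ T ∧ v ∈ T)
    (hr : Routable c T D) (X : Set V) : sepDem D X ≤ cutCap c X := by
  obtain ⟨f, ⟨hf0, hcap, _⟩, hdel⟩ := hr
  have h1 : sepDem D X ≤ ∑ u : V, ∑ v : V, if u ∈ X ∧ v ∉ X then delivered f u v else 0 := by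
    refine Finset.sum_le_sum fun u _ => Finset.sum_le_sum fun v _ => ?_
    split_ifs with h
    · by_cases hD0 : D u v = 0
      · rw [hD0]; exact delivered_nonneg hf0 u v
      · have hne : u ≠ v := by rintro rfl; exact h.2 h.1
        obtain ⟨hu, hv⟩ := hDT u v hne hD0
        exact hdel u hu v hv hne
    · exact le_refl 0
  have lhs_eq : (∑ u : V, ∑ v : V, if u ∈ X ∧ v ∉ X then delivered f u v else 0)
      = ∑ p ∈ f.support, ∑ u : V, ∑ v : V,
          if (u ∈ X ∧ v ∉ X) ∧ (isPathFrom u v p ∨ isPathFrom v u p) then f p else 0 := by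
    have h : ∀ u v : V, (if u ∈ X ∧ v ∉ X then delivered f u v else 0)
        = ∑ p ∈ f.support, if (u ∈ X ∧ v ∉ X) ∧ (isPathFrom u v p ∨ isPathFrom v u p)
            then f p else 0 := by
      intro u v
      split_ifs with h
      · refine Finset.sum_congr rfl fun p _ => ?_
        simp [h]
      · exact (Finset.sum_eq_zero fun p _ => by simp [h]).symm
    simp_rw [h]
    exact (Finset.sum_congr rfl fun u _ => Finset.sum_comm).trans Finset.sum_comm
  have rhs_eq : (∑ u : V, ∑ v : V, if u ∈ X ∧ v ∉ X then edgeLoad f u v else 0)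
      = ∑ p ∈ f.support, ∑ u : V, ∑ v : V,
          if u ∈ X ∧ v ∉ X then f p * (edgeCount u v p : ℝ) else 0 := by
    have h : ∀ u v : V, (if u ∈ X ∧ v ∉ X then edgeLoad f u v else 0)
        = ∑ p ∈ f.support, if u ∈ X ∧ v ∉ X then f p * (edgeCount u v p : ℝ) else 0 := by
      intro u v
      split_ifs with h
      · rfl
      · exact (Finset.sum_eq_zero fun p _ => rfl).symm
    simp_rw [h]
    exact (Finset.sum_congr rfl fun u _ => Finset.sum_comm).trans Finset.sum_comm
  have h2 : (∑ u : V, ∑ v : V, if u ∈ X ∧ v ∉ X then delivered f u v else 0)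
      ≤ ∑ u : V, ∑ v : V, if u ∈ X ∧ v ∉ X then edgeLoad f u v else 0 := by
    rw [lhs_eq, rhs_eq]
    refine Finset.sum_le_sum fun p _ => ?_
    have e1 : (∑ u : V, ∑ v : V, if (u ∈ X ∧ v ∉ X) ∧ (isPathFrom u v p ∨ isPathFrom v u p)
        then f p else 0) = f p * ∑ u : V, ∑ v : V,
          if (u ∈ X ∧ v ∉ X) ∧ (isPathFrom u v p ∨ isPathFrom v u p) then (1:ℝ) else 0 := by
      simp only [Finset.mul_sum, mul_ite, mul_one, mul_zero]
    have e2 : (∑ u : V, ∑ v : V, if u ∈ X ∧ v ∉ X then f p * (edgeCount u v p : ℝ) else 0)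
        = f p * ∑ u : V, ∑ v : V, if u ∈ X ∧ v ∉ X then (edgeCount u v p : ℝ) else 0 := by
      simp only [Finset.mul_sum, mul_ite, mul_one, mul_zero]
    rw [e1, e2]
    exact mul_le_mul_of_nonneg_left (key_path X p) (hf0 p)
  have h3 : (∑ u : V, ∑ v : V, if u ∈ X ∧ v ∉ X then edgeLoad f u v else 0) ≤ cutCap c X := by
    refine Finset.sum_le_sum fun u _ => Finset.sum_le_sum fun v _ => ?_
    split_ifs
    · exact hcap u v
    · exact le_refl 0
  exact le_trans h1 (le_trans h2 h3)

end Aux3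
section Aux4
variable {V : Type*}

lemma routable_zero (c : V → V → ℝ) (hc : ∀ u v, 0 ≤ c u v) (T : Set V)
    (D : V → V → ℝ) (hD : ∀ s t, s ∈ T → t ∈ T → s ≠ t → D s t ≤ 0) : Routable c T D := by
  refine ⟨0, ⟨fun p => le_refl 0, fun u v => ?_, fun p hp => absurd hp (by simp)⟩, ?_⟩
  · have : edgeLoad (0 : List V →₀ ℝ) u v = 0 := Finsupp.sum_zero_index
    rw [this]; exact hc u v
  · intro s hs t ht hst
    have : delivered (0 : List V →₀ ℝ) s t = 0 := Finsupp.sum_zero_index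
    rw [this]; exact hD s t hs ht hst

lemma routable_smul (c : V → V → ℝ) (T : Set V) (D : V → V → ℝ) (k : ℝ) (hk : 0 < k)
    (h : Routable c T D) : Routable (fun u v => k * c u v) T (fun s t => k * D s t) := by
  obtain ⟨f, ⟨hf0, hcap, hsupp⟩, hdel⟩ := h
  refine ⟨k • f, ⟨fun p => ?_, fun u v => ?_, fun p hp => hsupp p (Finsupp.support_smul hp)⟩, ?_⟩
  · rw [Finsupp.smul_apply, smul_eq_mul]
    exact mul_nonneg hk.le (hf0 p)
  · have : edgeLoad (k • f) u v = k * edgeLoad f u v := by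
      unfold edgeLoad
      rw [Finsupp.sum_smul_index (fun p => by rw [zero_mul]), Finsupp.mul_sum]
      exact Finsupp.sum_congr fun p _ => (mul_assoc k (f p) _)
    rw [this]
    exact mul_le_mul_of_nonneg_left (hcap u v) hk.le
  · intro s hs t ht hst
    have : delivered (k • f) s t = k * delivered f s t := by
      unfold delivered
      rw [Finsupp.sum_smul_index (fun p => by rw [if_ctx_congr Iff.rfl (fun _ => rfl) (fun _ => rfl)]; split_ifs <;> rfl), Finsupp.mul_sum]
      refine Finsupp.sum_congr fun p _ => ?_
      split_ifs <;> simp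
    rw [this]
    exact mul_le_mul_of_nonneg_left (hdel s hs t ht hst) hk.le

end Aux4
section Aux5
variable {V : Type*} [Fintype V]

lemma sepDem_smul (d : V → V → ℝ) (l : ℝ) (A : Set V) :
    sepDem (fun s t => l * d s t) A = l * sepDem d A := by
  unfold sepDem
  simp only [Finset.mul_sum, mul_ite, mul_zero]

lemma cutCap_nonneg (c : V → V → ℝ) (hc : ∀ u v, 0 ≤ c u v) (A : Set V) : 0 ≤ cutCap c A := by
  refine Finset.sum_nonneg fun u _ => Finset.sum_nonneg fun v _ => ?_
  split_ifs
  · exact hc u v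
  · exact le_refl 0

lemma sepDem_congr (d : V → V → ℝ) (T : Set V) (hsupp : ∀ u v, d u v ≠ 0 → u ∈ T ∧ v ∈ T)
    (A X : Set V) (hAX : ∀ u ∈ T, (u ∈ X ↔ u ∈ A)) : sepDem d X = sepDem d A := by
  unfold sepDem
  refine Finset.sum_congr rfl fun u _ => Finset.sum_congr rfl fun v _ => ?_
  by_cases hd0 : d u v = 0
  · rw [hd0]; simp
  · obtain ⟨hu, hv⟩ := hsupp u v hd0
    rw [hAX u hu, hAX v hv]

lemma mincutT_le_cutCap (c : V → V → ℝ) (hc : ∀ u v, 0 ≤ c u v) (T A : Set V) :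
    mincutT c (A ∩ T) (T \ (A ∩ T)) ≤ cutCap c A := by
  refine csInf_le ⟨0, ?_⟩ ⟨A, Set.inter_subset_left, ?_, rfl⟩
  · rintro x ⟨Y, _, _, rfl⟩
    exact cutCap_nonneg c hc Y
  · rw [Set.disjoint_left]
    rintro u huA ⟨huT, hun⟩
    exact hun ⟨huA, huT⟩

lemma sep_le_mincut (c : V → V → ℝ) (hc : ∀ u v, 0 ≤ c u v) (T : Set V) (D : V → V → ℝ)
    (hD : ∀ s t, 0 ≤ D s t) (hDT : ∀ u v, D u v ≠ 0 → u ∈ T ∧ v ∈ T)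
    (hr : Routable c T D) (A : Set V) :
    sepDem D A ≤ mincutT c (A ∩ T) (T \ (A ∩ T)) := by
  refine le_csInf ⟨cutCap c (A ∩ T), A ∩ T, subset_rfl, Set.disjoint_sdiff_right, rfl⟩ ?_
  rintro x ⟨X, hsub, hdisj, rfl⟩
  have hmem : ∀ u ∈ T, (u ∈ X ↔ u ∈ A) := by
    intro u huT
    constructor
    · intro huX
      by_contra huA
      exact (Set.disjoint_left.1 hdisj) huX ⟨huT, fun h => huA h.1⟩
    · intro huA
      exact hsub ⟨huA, huT⟩
  rw [← sepDem_congr D T hDT A X hmem]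
  exact flowcut c hc T D hD (fun u v _ h => hDT u v h) hr X

end Aux5
/-- cut-to-flow transfer: a quality-`β` cut-sparsifier, combined
with flow-cut gap bounds `γ, γ'` for demands supported on `H`, yields
`1/γ' ≤ λ_{G'}(d)/λ_G(d) ≤ β·γ`; consequently `G'` with capacities scaled by `γ'`
is a flow-sparsifier of quality `β·γ·γ'` for demands supported on `H`. -/
theorem cut_to_flow_transfer
    {V : Type*} [Fintype V] (c c' : V → V → ℝ) (T : Set V)
    (hc : ∀ u v, 0 ≤ c u v) (hc' : ∀ u v, 0 ≤ c' u v)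
    (β : ℝ) (hβ : 1 ≤ β)
    (hcutsparse : ∀ A : Set V, A ⊆ T →
      mincutT c A (T \ A) ≤ mincutT c' A (T \ A) ∧
      mincutT c' A (T \ A) ≤ β * mincutT c A (T \ A))
    (H : Set (V × V)) (hH : ∀ e ∈ H, e.1 ∈ T ∧ e.2 ∈ T)
    (γ γ' : ℝ) (hγ : 1 ≤ γ) (hγ' : 1 ≤ γ')
    (hgap : ∀ d : V → V → ℝ, (∀ s t, 0 ≤ d s t) →
      (∀ s t, d s t ≠ 0 → (s, t) ∈ H) → d ≠ 0 →
      sparsity c d ≤ γ * lamG c T d)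
    (hgap' : ∀ d : V → V → ℝ, (∀ s t, 0 ≤ d s t) →
      (∀ s t, d s t ≠ 0 → (s, t) ∈ H) → d ≠ 0 →
      sparsity c' d ≤ γ' * lamG c' T d)
    (d : V → V → ℝ) (hd : ∀ s t, 0 ≤ d s t)
    (hdH : ∀ s t, d s t ≠ 0 → (s, t) ∈ H) (hdne : d ≠ 0) :
    lamG c T d ≤ γ' * lamG c' T d ∧
    lamG c' T d ≤ β * γ * lamG c T d ∧
    lamG c T d ≤ lamG (fun u v => γ' * c' u v) T d ∧
    lamG (fun u v => γ' * c' u v) T d ≤ β * γ * γ' * lamG c T d := by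
  have hβ0 : (0:ℝ) < β := lt_of_lt_of_le one_pos hβ
  have hγ'0 : (0:ℝ) < γ' := lt_of_lt_of_le one_pos hγ'
  have hγc' : ∀ u v, 0 ≤ γ' * c' u v := fun u v => mul_nonneg hγ'0.le (hc' u v)
  by_cases hod : ∃ s t : V, s ≠ t ∧ d s t ≠ 0
  · -- main case
    obtain ⟨s₀, t₀, hst, hd0⟩ := hod
    have hdT : ∀ u v : V, d u v ≠ 0 → u ∈ T ∧ v ∈ T := fun u v h => hH (u, v) (hdH u v h)
    have hlD : ∀ l : ℝ, ∀ u v : V, l * d u v ≠ 0 → u ∈ T ∧ v ∈ T := by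
      intro l u v h
      refine hdT u v fun h0 => h ?_
      rw [h0, mul_zero]
    -- positive separated demand witness
    have hsepA₀ : 0 < sepDem d ({s₀} : Set V) := by
      have h1 : d s₀ t₀ ≤ sepDem d ({s₀} : Set V) := by
        have inner : d s₀ t₀ ≤ ∑ v : V, if s₀ ∈ ({s₀} : Set V) ∧ v ∉ ({s₀} : Set V)
            then d s₀ v else 0 := by
          refine le_trans ?_ (Finset.single_le_sum (f := fun v => if s₀ ∈ ({s₀} : Set V) ∧
            v ∉ ({s₀} : Set V) then d s₀ v else 0) (fun v _ => by
              try dsimp only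
              split_ifs
              · exact hd s₀ v
              · exact le_refl 0) (Finset.mem_univ t₀))
          show d s₀ t₀ ≤ if s₀ ∈ ({s₀} : Set V) ∧ t₀ ∉ ({s₀} : Set V) then d s₀ t₀ else 0
          rw [if_pos ⟨rfl, fun h => hst (Set.mem_singleton_iff.1 h).symm⟩]
        refine le_trans inner (Finset.single_le_sum (f := fun u => ∑ v : V,
          if u ∈ ({s₀} : Set V) ∧ v ∉ ({s₀} : Set V) then d u v else 0)
          (fun u _ => Finset.sum_nonneg fun v _ => by
            try dsimp only
            split_ifs
            · exact hd u v
            · exact le_refl 0) (Finset.mem_univ s₀))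
      exact lt_of_lt_of_le ((hd s₀ t₀).lt_of_ne (Ne.symm hd0)) h1
    have key : ∀ (c₀ : V → V → ℝ), (∀ u v, 0 ≤ c₀ u v) → ∀ l : ℝ, 0 ≤ l →
        Routable c₀ T (fun s t => l * d s t) → ∀ A : Set V,
        l * sepDem d A ≤ mincutT c₀ (A ∩ T) (T \ (A ∩ T)) := by
      intro c₀ hc₀ l hl hr A
      rw [← sepDem_smul]
      exact sep_le_mincut c₀ hc₀ T _ (fun s t => mul_nonneg hl (hd s t)) (hlD l) hr A
    have hbdd : ∀ (c₀ : V → V → ℝ), (∀ u v, 0 ≤ c₀ u v) →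
        BddAbove {l : ℝ | 0 ≤ l ∧ Routable c₀ T (fun s t => l * d s t)} := by
      intro c₀ hc₀
      refine ⟨cutCap c₀ ({s₀} : Set V) / sepDem d ({s₀} : Set V), fun l hl => ?_⟩
      rw [le_div_iff₀ hsepA₀]
      exact le_trans (key c₀ hc₀ l hl.1 hl.2 _)
        (mincutT_le_cutCap c₀ hc₀ T _)
    have hne : ∀ (c₀ : V → V → ℝ), (∀ u v, 0 ≤ c₀ u v) →
        (0:ℝ) ∈ {l : ℝ | 0 ≤ l ∧ Routable c₀ T (fun s t => l * d s t)} := by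
      intro c₀ hc₀
      exact ⟨le_refl 0, routable_zero c₀ hc₀ T _ (fun s t _ _ _ => by rw [zero_mul])⟩
    -- Goal 1
    have G1 : lamG c T d ≤ γ' * lamG c' T d := by
      refine csSup_le ⟨0, hne c hc⟩ fun l hl => ?_
      have h1 : l ≤ sparsity c' d := by
        refine le_csInf ⟨cutCap c' ({s₀} : Set V) / sepDem d ({s₀} : Set V),
          ({s₀} : Set V), hsepA₀, rfl⟩ ?_
        rintro x ⟨A, hA, rfl⟩
        rw [le_div_iff₀ hA]
        calc l * sepDem d A ≤ mincutT c (A ∩ T) (T \ (A ∩ T)) := key c hc l hl.1 hl.2 A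
          _ ≤ mincutT c' (A ∩ T) (T \ (A ∩ T)) := (hcutsparse (A ∩ T) Set.inter_subset_right).1
          _ ≤ cutCap c' A := mincutT_le_cutCap c' hc' T A
      exact le_trans h1 (hgap' d hd hdH hdne)
    -- Goal 2
    have G2 : lamG c' T d ≤ β * γ * lamG c T d := by
      refine csSup_le ⟨0, hne c' hc'⟩ fun l hl => ?_
      have h1 : l / β ≤ sparsity c d := by
        refine le_csInf ⟨cutCap c ({s₀} : Set V) / sepDem d ({s₀} : Set V),
          ({s₀} : Set V), hsepA₀, rfl⟩ ?_
        rintro x ⟨A, hA, rfl⟩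
        rw [div_le_div_iff₀ hβ0 hA]
        calc l * sepDem d A ≤ mincutT c' (A ∩ T) (T \ (A ∩ T)) := key c' hc' l hl.1 hl.2 A
          _ ≤ β * mincutT c (A ∩ T) (T \ (A ∩ T)) := (hcutsparse (A ∩ T) Set.inter_subset_right).2
          _ ≤ β * cutCap c A := mul_le_mul_of_nonneg_left (mincutT_le_cutCap c hc T A) hβ0.le
          _ = cutCap c A * β := mul_comm _ _
      have h2 := (div_le_iff₀ hβ0).1 (le_trans h1 (hgap d hd hdH hdne))
      calc l ≤ γ * lamG c T d * β := h2
        _ = β * γ * lamG c T d := by ring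
    -- scaled network comparisons
    have hmem_up : ∀ l : ℝ, l ∈ {l : ℝ | 0 ≤ l ∧ Routable c' T (fun s t => l * d s t)} →
        γ' * l ∈ {l : ℝ | 0 ≤ l ∧ Routable (fun u v => γ' * c' u v) T (fun s t => l * d s t)} := by
      intro l hl
      refine ⟨mul_nonneg hγ'0.le hl.1, ?_⟩
      have h := routable_smul c' T (fun s t => l * d s t) γ' hγ'0 hl.2
      have heq : (fun s t => γ' * (l * d s t)) = fun s t => γ' * l * d s t := by
        funext s t; ring
      rwa [heq] at h
    have hmem_down : ∀ l : ℝ, l ∈ {l : ℝ | 0 ≤ l ∧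
        Routable (fun u v => γ' * c' u v) T (fun s t => l * d s t)} →
        l / γ' ∈ {l : ℝ | 0 ≤ l ∧ Routable c' T (fun s t => l * d s t)} := by
      intro l hl
      refine ⟨div_nonneg hl.1 hγ'0.le, ?_⟩
      have h := routable_smul (fun u v => γ' * c' u v) T (fun s t => l * d s t) (1/γ')
        (by positivity) hl.2
      have heq1 : (fun u v => 1/γ' * (γ' * c' u v)) = c' := by
        funext u v; field_simp
      have heq2 : (fun s t => 1/γ' * (l * d s t)) = fun s t => l / γ' * d s t := by
        funext s t; field_simp
      rwa [heq1, heq2] at h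
    have G3' : γ' * lamG c' T d ≤ lamG (fun u v => γ' * c' u v) T d := by
      have h3 : lamG c' T d ≤ lamG (fun u v => γ' * c' u v) T d / γ' := by
        refine csSup_le ⟨0, hne c' hc'⟩ fun l hl => ?_
        rw [le_div_iff₀ hγ'0]
        calc l * γ' = γ' * l := mul_comm _ _
          _ ≤ _ := le_csSup (hbdd _ hγc') (hmem_up l hl)
      calc γ' * lamG c' T d ≤ γ' * (lamG (fun u v => γ' * c' u v) T d / γ') :=
            mul_le_mul_of_nonneg_left h3 hγ'0.le
        _ = lamG (fun u v => γ' * c' u v) T d := by field_simp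
    have G4' : lamG (fun u v => γ' * c' u v) T d ≤ γ' * lamG c' T d := by
      refine csSup_le ⟨0, hne _ hγc'⟩ fun l hl => ?_
      calc l = γ' * (l / γ') := by field_simp
        _ ≤ γ' * lamG c' T d :=
            mul_le_mul_of_nonneg_left (le_csSup (hbdd c' hc') (hmem_down l hl)) hγ'0.le
    refine ⟨G1, G2, le_trans G1 G3', ?_⟩
    calc lamG (fun u v => γ' * c' u v) T d ≤ γ' * lamG c' T d := G4'
      _ ≤ γ' * (β * γ * lamG c T d) := mul_le_mul_of_nonneg_left G2 hγ'0.le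
      _ = β * γ * γ' * lamG c T d := by ring
  · -- degenerate case: all demand is diagonal
    push_neg at hod
    have hall : ∀ (c₀ : V → V → ℝ), (∀ u v, 0 ≤ c₀ u v) → lamG c₀ T d = 0 := by
      intro c₀ hc₀
      have hset : {l : ℝ | 0 ≤ l ∧ Routable c₀ T (fun s t => l * d s t)} = Set.Ici 0 := by
        ext l
        simp only [Set.mem_setOf_eq, Set.mem_Ici, and_iff_left_iff_imp]
        intro _
        refine routable_zero c₀ hc₀ T _ fun s t _ _ hst => ?_
        rw [hod s t hst, mul_zero]
      show sSup _ = 0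
      rw [hset]
      exact Real.sSup_of_not_bddAbove (by simpa using not_bddAbove_Ici (0:ℝ))
    rw [hall c hc, hall c' hc', hall _ hγc']
    norm_num
end
end
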